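/- arXiv:1604.03063 — 5 statements merged into one kernel-verified Lean document; each statement's English description precedes it below -/
import Mathlib

section
/- Let k be a commutative ring and let G=(V,E) be a finite graph. Then the chromatic symmetric function of G satisfies X_G = Σ_{F ⊆ E} (−1)^{|F|} p_{λ(V,F)}. -/
/-!
Extracting coefficients, `p_{λ(V,F)}` counts the colorings `f` with a given monomial that are
constant on the components of `(V, F)`, i.e. on every edge of `F`. Exchanging the two sums, a
coloring `f` contributes `∑_{F ⊆ M_f} (-1)^{|F|}`, where `M_f ⊆ E` is its set of monochromatic
edges; this alternating sum is `1` if `M_f = ∅`, i.e. if `f` is proper, and `0` otherwise.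
-/

open scoped Classical

noncomputable section

/-- The `n`-th power sum symmetric function `p_n = ∑_{j ≥ 1} x_j^n` (with `p_0 = 1`),
as a multivariate power series over `k` in variables indexed by positive integers. -/
def powerSum (k : Type*) [CommRing k] (n : ℕ) : MvPowerSeries ℕ+ k :=
  fun d => if ∃ j : ℕ+, d = Finsupp.single j n then 1 else 0

/-- The exponent vector of the monomial `x_f = ∏_{v ∈ V} x_{f v}` attached to a
coloring `f : V → ℕ+`. -/
def colorMonomial {V : Type*} [Fintype V] (f : V → ℕ+) : ℕ+ →₀ ℕ :=
  ∑ v : V, Finsupp.single (f v) 1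

/-- A coloring `f` of the graph `(V, E)` is proper if the endpoints of each edge
receive distinct colors. -/
def IsProperColoring {V Y : Type*} (E : Finset (Sym2 V)) (f : V → Y) : Prop :=
  ∀ u w : V, s(u, w) ∈ E → f u ≠ f w

/-- The chromatic symmetric function `X_G = ∑_{f proper coloring} x_f`, described via
its coefficients: the coefficient of the monomial with exponent vector `d` is the
number of proper colorings `f : V → ℕ+` whose monomial `x_f` has exponent vector `d`. -/
def chromSym (k : Type*) [CommRing k] {V : Type*} [Fintype V]
    (E : Finset (Sym2 V)) : MvPowerSeries ℕ+ k :=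
  fun d => (Set.ncard {f : V → ℕ+ | IsProperColoring E f ∧ colorMonomial f = d} : k)

/-- `p_{λ(V,F)}`: the product of `p_{|c|}` over all connected components `c` of the
graph `(V, F)`. -/
def pLambda (k : Type*) [CommRing k] {V : Type*} (F : Finset (Sym2 V)) :
    MvPowerSeries ℕ+ k :=
  ∏ᶠ c : (SimpleGraph.fromEdgeSet (↑F : Set (Sym2 V))).ConnectedComponent,
    powerSum k (Nat.card c.supp)

open Finset SimpleGraph

theorem coeff_prod_powerSum {k ι : Type*} [CommRing k] [Fintype ι] (n : ι → ℕ) (hn : ∀ i, n i ≠ 0)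
    (d : ℕ+ →₀ ℕ) :
    MvPowerSeries.coeff d (∏ i, powerSum k (n i)) =
      {g : ι → ℕ+ | ∑ i, Finsupp.single (g i) (n i) = d}.ncard := by
  let φ : (ι → ℕ+) → ι →₀ ℕ+ →₀ ℕ := fun g =>
    Finsupp.equivFunOnFinite.symm fun i => Finsupp.single (g i) (n i)
  have hφ : φ.Injective := fun g g' h => funext fun i =>
    (Finsupp.single_left_inj (hn i)).mp (DFunLike.congr_fun h i)
  have himage : φ '' {g | ∑ i, Finsupp.single (g i) (n i) = d} =
      ↑((finsuppAntidiag univ d).filter fun l => ∀ i, ∃ j, l i = Finsupp.single j (n i)) := by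
    ext l
    simp only [Set.mem_image, Set.mem_ofPred_eq, coe_filter, mem_finsuppAntidiag,
      subset_univ, and_true]
    constructor
    · rintro ⟨g, rfl, rfl⟩
      exact ⟨rfl, fun i => ⟨g i, rfl⟩⟩
    · rintro ⟨rfl, hl⟩
      choose g hg using hl
      refine ⟨g, by simp [hg], Finsupp.ext fun i => (hg i).symm⟩
  rw [MvPowerSeries.coeff_prod, ← Set.ncard_image_of_injective _ hφ, himage, Set.ncard_coe_finset,
    ← sum_boole]
  refine sum_congr rfl fun l _ => ?_
  change ∏ i, (if ∃ j, l i = Finsupp.single j (n i) then (1 : k) else 0) = _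
  simp only [prod_boole, mem_univ, true_implies]

theorem sum_powerset_neg_one_pow_card_ite_forall {R α : Type*} [CommRing R] (E : Finset α)
    (p : α → Prop) [DecidablePred p] :
    ∑ F ∈ E.powerset, (if ∀ e ∈ F, p e then (-1 : R) ^ #F else 0) =
      if ∀ e ∈ E, ¬ p e then 1 else 0 := by
  have hfilter : E.powerset.filter (fun F => ∀ e ∈ F, p e) = (E.filter p).powerset := by
    ext F
    simp only [mem_filter, mem_powerset, subset_iff]
    grind
  rw [← sum_filter, hfilter]
  simpa [filter_eq_empty_iff] using
    congrArg (Int.cast : ℤ → R) (sum_powerset_neg_one_pow_card (x := E.filter p))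

section Components

variable {V Y : Type*}

def IsConstOnEdges (F : Finset (Sym2 V)) (f : V → Y) : Prop :=
  ∀ u w : V, s(u, w) ∈ F → f u = f w

theorem IsConstOnEdges.eq_of_reachable {F : Finset (Sym2 V)} {f : V → Y}
    (hf : IsConstOnEdges F f) {u w : V} (h : (fromEdgeSet (F : Set (Sym2 V))).Reachable u w) :
    f u = f w := by
  rw [reachable_fromEdgeSet_eq_reflTransGen_toRel] at h
  induction h with
  | refl => rfl
  | tail _ hvw ih => exact ih.trans (hf _ _ hvw)

theorem isConstOnEdges_iff_exists_comp (F : Finset (Sym2 V)) (f : V → Y) :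
    IsConstOnEdges F f ↔
      ∃ g : (fromEdgeSet (F : Set (Sym2 V))).ConnectedComponent → Y,
        g ∘ (fromEdgeSet (F : Set (Sym2 V))).connectedComponentMk = f := by
  constructor
  · intro hf
    refine ⟨fun c => f c.out, funext fun v => (hf.eq_of_reachable ?_).symm⟩
    exact ConnectedComponent.exact (Quot.out_eq _).symm
  · rintro ⟨g, rfl⟩ u w huw
    by_cases h : u = w
    · rw [h]
    · exact congrArg g (ConnectedComponent.sound (fromEdgeSet_adj _ |>.mpr ⟨huw, h⟩).reachable)

variable [Fintype V]

theorem colorMonomial_comp_connectedComponentMk (G : SimpleGraph V)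
    [Fintype G.ConnectedComponent] (g : G.ConnectedComponent → ℕ+) :
    colorMonomial (g ∘ G.connectedComponentMk) =
      ∑ c, Finsupp.single (g c) (Nat.card c.supp) := by
  rw [colorMonomial, ← sum_fiberwise univ G.connectedComponentMk]
  refine sum_congr rfl fun c _ => ?_
  rw [sum_congr rfl fun v hv => by rw [Function.comp_apply, (mem_filter.mp hv).2], sum_const,
    Finsupp.smul_single_one]
  congr 1
  rw [Nat.card_coe_set_eq, Set.ncard_eq_toFinset_card']
  congr 1
  ext v
  simp [ConnectedComponent.mem_supp_iff]

theorem ncard_isConstOnEdges_colorMonomial_eq (F : Finset (Sym2 V)) (d : ℕ+ →₀ ℕ) :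
    {f : V → ℕ+ | IsConstOnEdges F f ∧ colorMonomial f = d}.ncard =
      {g : (fromEdgeSet (F : Set (Sym2 V))).ConnectedComponent → ℕ+ |
        ∑ c, Finsupp.single (g c) (Nat.card c.supp) = d}.ncard := by
  have hinj : Function.Injective
      fun g : (fromEdgeSet (F : Set (Sym2 V))).ConnectedComponent → ℕ+ =>
        g ∘ (fromEdgeSet (F : Set (Sym2 V))).connectedComponentMk :=
    fun g g' h => funext fun c => by
      obtain ⟨v, rfl⟩ := c.exists_rep
      exact congrFun h v
  rw [← Set.ncard_image_of_injective _ hinj]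
  congr 1
  ext f
  constructor
  · rintro ⟨hf, rfl⟩
    obtain ⟨g, rfl⟩ := (isConstOnEdges_iff_exists_comp F f).mp hf
    exact ⟨g, (colorMonomial_comp_connectedComponentMk _ g).symm, rfl⟩
  · rintro ⟨g, hg, rfl⟩
    exact ⟨(isConstOnEdges_iff_exists_comp F _).mpr ⟨g, rfl⟩,
      (colorMonomial_comp_connectedComponentMk _ g).trans hg⟩

theorem coeff_pLambda (k : Type*) [CommRing k] (F : Finset (Sym2 V)) (d : ℕ+ →₀ ℕ) :
    MvPowerSeries.coeff d (pLambda k F) =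
      {f : V → ℕ+ | IsConstOnEdges F f ∧ colorMonomial f = d}.ncard := by
  rw [ncard_isConstOnEdges_colorMonomial_eq, pLambda, finprod_eq_prod_of_fintype]
  exact coeff_prod_powerSum _
    (fun c => Nat.card_ne_zero.mpr ⟨c.nonempty_supp.to_subtype, inferInstance⟩) d

end Components

section Colorings

variable {V Y : Type*}

theorem isConstOnEdges_iff_forall_isDiag {F : Finset (Sym2 V)} {f : V → Y} :
    IsConstOnEdges F f ↔ ∀ e ∈ F, (e.map f).IsDiag := by
  simp [IsConstOnEdges, Sym2.forall]

theorem isProperColoring_iff_forall_not_isDiag {E : Finset (Sym2 V)} {f : V → Y} :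
    IsProperColoring E f ↔ ∀ e ∈ E, ¬ (e.map f).IsDiag := by
  simp [IsProperColoring, Sym2.forall]

theorem sum_powerset_ite_isConstOnEdges (k : Type*) [CommRing k] (E : Finset (Sym2 V))
    (f : V → Y) :
    ∑ F ∈ E.powerset, (if IsConstOnEdges F f then (-1 : k) ^ #F else 0) =
      if IsProperColoring E f then 1 else 0 := by
  simp only [isConstOnEdges_iff_forall_isDiag, isProperColoring_iff_forall_not_isDiag]
  exact sum_powerset_neg_one_pow_card_ite_forall (R := k) E _

variable [Fintype V]

theorem finite_setOf_colorMonomial_eq (d : ℕ+ →₀ ℕ) :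
    {f : V → ℕ+ | colorMonomial f = d}.Finite := by
  refine (Set.Finite.pi fun _ : V => d.support.finite_toSet).subset fun f hf v _ => ?_
  rw [Set.mem_ofPred_eq] at hf
  subst hf
  simp only [mem_coe, Finsupp.mem_support_iff, colorMonomial, Finsupp.finsetSum_apply]
  exact (sum_pos' (fun _ _ => Nat.zero_le _) ⟨v, mem_univ v, by simp⟩).ne'

theorem ncard_setOf_and_colorMonomial_eq (P : (V → ℕ+) → Prop) (d : ℕ+ →₀ ℕ) :
    {f : V → ℕ+ | P f ∧ colorMonomial f = d}.ncard =
      #((finite_setOf_colorMonomial_eq d).toFinset.filter P) := by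
  rw [← Set.ncard_coe_finset]
  congr 1
  ext f
  simp [and_comm]

end Colorings

theorem chromSym_eq_sum_powerset_general
    (k : Type*) [CommRing k] {V : Type*} [Fintype V]
    (E : Finset (Sym2 V)) :
    chromSym k E = ∑ F ∈ E.powerset, (-1 : k) ^ F.card • pLambda k F := by
  ext d
  set S := (finite_setOf_colorMonomial_eq (V := V) d).toFinset
  calc MvPowerSeries.coeff d (chromSym k E)
      = ∑ f ∈ S, ∑ F ∈ E.powerset, if IsConstOnEdges F f then (-1 : k) ^ #F else 0 := by
        simp only [sum_powerset_ite_isConstOnEdges, sum_boole]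
        exact congrArg Nat.cast (ncard_setOf_and_colorMonomial_eq _ d)
    _ = ∑ F ∈ E.powerset, (-1 : k) ^ #F * #(S.filter (IsConstOnEdges F)) := by
        rw [sum_comm]
        simp only [← sum_filter, sum_const, nsmul_eq_mul, mul_comm]
    _ = MvPowerSeries.coeff d (∑ F ∈ E.powerset, (-1 : k) ^ F.card • pLambda k F) := by
        simp only [map_sum, map_smul, coeff_pLambda, ncard_setOf_and_colorMonomial_eq,
          smul_eq_mul, S]

/-- For a finite graph `G = (V, E)`,
`X_G = ∑_{F ⊆ E} (−1)^{|F|} p_{λ(V,F)}`. -/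
theorem chromSym_eq_sum_powerset
    (k : Type*) [CommRing k] {V : Type*} [Fintype V] [DecidableEq V]
    (E : Finset (Sym2 V)) (hE : ∀ e ∈ E, ¬ e.IsDiag) :
    chromSym k E = ∑ F ∈ E.powerset, (-1 : k) ^ F.card • pLambda k F :=
  chromSym_eq_sum_powerset_general k E
end
end

section
/- Let G=(V,E) be a finite graph. Then the chromatic polynomial of G satisfies χ_G = Σ_{F ⊆ E} (−1)^{|F|} x^{conn(V,F)} in ℤ[x]. -/
open scoped Classical

noncomputable section

/-- `conn (V, F)`: the number of connected components of the graph `(V, F)`. -/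
def numComponents {V : Type*} (F : Finset (Sym2 V)) : ℕ :=
  Nat.card (SimpleGraph.fromEdgeSet (↑F : Set (Sym2 V))).ConnectedComponent

/-- A circuit of the graph `(V, E)`: the edge set
`{{v_0,v_1},{v_1,v_2},…,{v_{m-1},v_m}}` of a cycle `(v_0, v_1, …, v_m)` with `m > 1`,
`v_m = v_0`, the vertices `v_0, …, v_{m-1}` pairwise distinct, and all edges in `E`. -/
def IsCircuit {V : Type*} (E : Finset (Sym2 V)) (C : Finset (Sym2 V)) : Prop :=
  ∃ (m : ℕ) (v : ℕ → V), 1 < m ∧ v m = v 0 ∧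
    (∀ i < m, ∀ j < m, v i = v j → i = j) ∧
    (∀ i < m, s(v i, v (i + 1)) ∈ E) ∧
    C = (Finset.range m).image fun i => s(v i, v (i + 1))

/-- A broken circuit of the graph `(V, E)` (with respect to the labeling function `ℓ`):
a set of the form `C \ {e}`, where `C` is a circuit of `G` and `e` is the unique edge
of `C` attaining the maximum label among the edges of `C`. -/
def IsBrokenCircuit {V X : Type*} [LinearOrder X] (E : Finset (Sym2 V))
    (ℓ : Sym2 V → X) (K : Finset (Sym2 V)) : Prop :=
  ∃ C e, IsCircuit E C ∧ e ∈ C ∧ (∀ e' ∈ C, e' ≠ e → ℓ e' < ℓ e) ∧ K = C.erase e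

section aux

variable {V : Type*}

lemma walk_constant {F : Finset (Sym2 V)} {q : ℕ} {f : V → Fin q}
    (h : ∀ u w : V, s(u, w) ∈ F → f u = f w) :
    ∀ {u w : V}, (SimpleGraph.fromEdgeSet (↑F : Set (Sym2 V))).Walk u w → f u = f w := by
  intro u w p
  induction p with
  | nil => rfl
  | cons ha _ ih =>
      rw [SimpleGraph.fromEdgeSet_adj] at ha
      exact (h _ _ ha.1).trans ih

lemma card_mono [Fintype V] (F : Finset (Sym2 V)) (q : ℕ) :
    Nat.card {f : V → Fin q // ∀ u w : V, s(u, w) ∈ F → f u = f w}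
      = q ^ numComponents F := by
  set G := SimpleGraph.fromEdgeSet (↑F : Set (Sym2 V)) with hG
  have e : {f : V → Fin q // ∀ u w : V, s(u, w) ∈ F → f u = f w}
      ≃ (G.ConnectedComponent → Fin q) :=
    { toFun := fun fh => SimpleGraph.ConnectedComponent.lift fh.1
        (fun v w p _ => walk_constant fh.2 p)
      invFun := fun g => ⟨fun v => g (G.connectedComponentMk v), by
        intro u w hm
        by_cases huw : u = w
        · rw [huw]
        · exact congrArg g (SimpleGraph.ConnectedComponent.sound
            (((SimpleGraph.fromEdgeSet_adj _).mpr ⟨hm, huw⟩).reachable))⟩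
      left_inv := fun fh => rfl
      right_inv := fun g => by
        funext c
        induction c using SimpleGraph.ConnectedComponent.ind
        rfl }
  rw [Nat.card_congr e, Nat.card_fun, Nat.card_eq_fintype_card (α := Fin q), Fintype.card_fin]
  rfl

end aux

/-- For a finite graph `G = (V, E)`, the chromatic polynomial
(the unique `P ∈ ℤ[x]` with `P(q) = `(number of proper colorings `f : V → {1,…,q}`)
for all `q ∈ ℕ`) satisfies `χ_G = ∑_{F ⊆ E} (−1)^{|F|} x^{conn(V,F)}`. -/
theorem chromaticPolynomial_eq_sum_powerset
    {V : Type*} [Fintype V] [DecidableEq V]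
    (E : Finset (Sym2 V)) (hE : ∀ e ∈ E, ¬ e.IsDiag)
    (P : Polynomial ℤ)
    (hP : ∀ q : ℕ, P.eval (q : ℤ) = Nat.card {f : V → Fin q // IsProperColoring E f}) :
    P = ∑ F ∈ E.powerset, (-1 : Polynomial ℤ) ^ F.card * Polynomial.X ^ numComponents F := by
  set Q : Polynomial ℤ :=
    ∑ F ∈ E.powerset, (-1 : Polynomial ℤ) ^ F.card * Polynomial.X ^ numComponents F with hQ
  -- key: Q evaluates at every natural to the number of proper colorings
  have key : ∀ q : ℕ, Q.eval (q : ℤ) =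
      Nat.card {f : V → Fin q // IsProperColoring E f} := by
    intro q
    set B : (V → Fin q) → Finset (Sym2 V) :=
      fun f => E.filter (fun e => ∃ u w : V, e = s(u, w) ∧ f u = f w) with hB
    have hBsub : ∀ f, B f ⊆ E := fun f => Finset.filter_subset _ _
    have hMono : ∀ (F : Finset (Sym2 V)), F ∈ E.powerset → ∀ f : V → Fin q,
        (∀ u w : V, s(u, w) ∈ F → f u = f w) ↔ F ⊆ B f := by
      intro F hF f
      rw [Finset.mem_powerset] at hF
      constructor
      · intro h e he
        rw [hB, Finset.mem_filter]
        refine ⟨hF he, ?_⟩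
        induction e using Sym2.inductionOn with
        | hf u w => exact ⟨u, w, rfl, h u w he⟩
      · intro h u w huw
        have := h huw
        rw [hB, Finset.mem_filter] at this
        obtain ⟨-, u', w', he, hf⟩ := this
        rw [Sym2.eq_iff] at he
        rcases he with ⟨rfl, rfl⟩ | ⟨rfl, rfl⟩
        · exact hf
        · exact hf.symm
    have hBempty : ∀ f : V → Fin q, B f = ∅ ↔ IsProperColoring E f := by
      intro f
      rw [hB, Finset.filter_eq_empty_iff]
      constructor
      · intro h u w huw hfe
        exact h huw ⟨u, w, rfl, hfe⟩
      · rintro h e he ⟨u, w, rfl, hf⟩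
        exact h u w he hf
    have heval : Q.eval (q : ℤ)
        = ∑ F ∈ E.powerset, (-1 : ℤ) ^ F.card * (q : ℤ) ^ numComponents F := by
      rw [hQ, Polynomial.eval_finset_sum]
      simp
    rw [heval]
    have h1 : ∀ F ∈ E.powerset, (-1 : ℤ) ^ F.card * (q : ℤ) ^ numComponents F
        = ∑ f : V → Fin q,
            if (∀ u w : V, s(u, w) ∈ F → f u = f w) then (-1 : ℤ) ^ F.card else 0 := by
      intro F hF
      have : ((q : ℤ)) ^ numComponents F
          = ∑ f : V → Fin q,
              if (∀ u w : V, s(u, w) ∈ F → f u = f w) then (1 : ℤ) else 0 := by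
        rw [← Finset.sum_filter, Finset.sum_const, nsmul_eq_mul, mul_one,
          ← Fintype.card_subtype, ← Nat.card_eq_fintype_card, card_mono F q]
        push_cast
        rfl
      rw [this, Finset.mul_sum]
      refine Finset.sum_congr rfl fun f _ => ?_
      by_cases h : ∀ u w : V, s(u, w) ∈ F → f u = f w <;> simp [h]
    calc ∑ F ∈ E.powerset, (-1 : ℤ) ^ F.card * (q : ℤ) ^ numComponents F
        = ∑ F ∈ E.powerset, ∑ f : V → Fin q,
            if (∀ u w : V, s(u, w) ∈ F → f u = f w) then (-1 : ℤ) ^ F.card else 0 :=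
          Finset.sum_congr rfl h1
      _ = ∑ f : V → Fin q, ∑ F ∈ E.powerset,
            if (∀ u w : V, s(u, w) ∈ F → f u = f w) then (-1 : ℤ) ^ F.card else 0 :=
          Finset.sum_comm
      _ = ∑ f : V → Fin q, (if B f = ∅ then (1 : ℤ) else 0) := by
          refine Finset.sum_congr rfl fun f _ => ?_
          have : ∑ F ∈ E.powerset,
              (if (∀ u w : V, s(u, w) ∈ F → f u = f w) then (-1 : ℤ) ^ F.card else 0)
              = ∑ F ∈ E.powerset, (if F ⊆ B f then (-1 : ℤ) ^ F.card else 0) := by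
            refine Finset.sum_congr rfl fun F hF => ?_
            rw [if_congr (hMono F hF f) rfl rfl]
          rw [this, ← Finset.sum_filter]
          have hps : E.powerset.filter (fun F => F ⊆ B f) = (B f).powerset := by
            ext F
            simp only [Finset.mem_filter, Finset.mem_powerset]
            exact ⟨fun h => h.2, fun h => ⟨h.trans (hBsub f), h⟩⟩
          rw [hps, Finset.sum_powerset_neg_one_pow_card]
      _ = ∑ f : V → Fin q, (if IsProperColoring E f then (1 : ℤ) else 0) := by
          refine Finset.sum_congr rfl fun f _ => ?_
          rw [if_congr (hBempty f) rfl rfl]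
      _ = Nat.card {f : V → Fin q // IsProperColoring E f} := by
          rw [← Finset.sum_filter, Finset.sum_const, nsmul_eq_mul, mul_one,
            ← Fintype.card_subtype, ← Nat.card_eq_fintype_card]
  -- conclude the polynomial identity
  have hinj : Function.Injective ((↑) : ℕ → ℤ) := Nat.cast_injective
  have hroots : Set.Infinite {x : ℤ | (P - Q).IsRoot x} := by
    refine (Set.infinite_range_of_injective hinj).mono ?_
    rintro x ⟨q, rfl⟩
    simp only [Set.mem_setOf_eq, Polynomial.IsRoot, Polynomial.eval_sub]
    rw [hP q, key q, sub_self]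
  have := Polynomial.eq_zero_of_infinite_isRoot (P - Q) hroots
  exact sub_eq_zero.mp this
end
end

section
/- Let k be a commutative ring. Let M=(E,𝓘) be a matroid with m = r_M(E), let X be a totally ordered set, let ℓ : E → X be a labeling function, let 𝔎 be a set of broken circuits of M (not necessarily all of them), and let a_K ∈ k be given for each K ∈ 𝔎. Then, in k[x], the polynomial χ̃_M satisfies χ̃_M = Σ_{F ⊆ E} (−1)^{|F|} (Π_{K ∈ 𝔎, K ⊆ F} a_K) · x^{m − r_M(F)}. -/
open scoped Classical

noncomputable section

/-- The rank function of the matroid `(E, 𝓘)` (with ground set the whole type `α`):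
`r_M(S) = max { |Z| : Z ∈ 𝓘, Z ⊆ S }`. -/
def mrank {α : Type*} [DecidableEq α] (𝓘 : Finset (Finset α)) (S : Finset α) : ℕ :=
  (𝓘.filter fun Z => Z ⊆ S).sup Finset.card

/-- `T` is a flat of the matroid `(E, 𝓘)`: for some `k`, the set `T` has rank `k` and is
maximal (under inclusion) among subsets of the ground set of rank `k`. -/
def IsFlat {α : Type*} [DecidableEq α] (𝓘 : Finset (Finset α)) (T : Finset α) : Prop :=
  ∃ k, mrank 𝓘 T = k ∧ ∀ W : Finset α, mrank 𝓘 W = k → T ⊆ W → W = T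

/-- `C` is a circuit of the matroid `(E, 𝓘)`: a minimal element of `𝒫(E) ∖ 𝓘`. -/
def IsCircuitM {α : Type*} (𝓘 : Finset (Finset α)) (C : Finset α) : Prop :=
  C ∉ 𝓘 ∧ ∀ D : Finset α, D ∉ 𝓘 → D ⊆ C → D = C

/-- The closure `T̄` of `T`: the intersection of all flats of the matroid containing
`T`. -/
def mclosure {α : Type*} [Fintype α] [DecidableEq α] (𝓘 : Finset (Finset α))
    (T : Finset α) : Finset α :=
  Finset.univ.filter fun x => ∀ G : Finset α, IsFlat 𝓘 G → T ⊆ G → x ∈ G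

/-- A broken circuit of the matroid `(E, 𝓘)` (with respect to the labeling function
`ℓ`): a set of the form `C \ {e}`, where `C` is a circuit of `M` and `e` is the unique
element of `C` attaining the maximum label among the elements of `C`. -/
def IsBrokenCircuitM {α X : Type*} [LinearOrder X] (𝓘 : Finset (Finset α))
    (ℓ : α → X) (K : Finset α) : Prop :=
  ∃ C e, IsCircuitM 𝓘 C ∧ e ∈ C ∧ (∀ e' ∈ C, e' ≠ e → ℓ e' < ℓ e) ∧ K = C.erase e

section Aux
variable {α : Type*} [DecidableEq α] {𝓘 : Finset (Finset α)}

lemma mrank_mono {S T : Finset α} (h : S ⊆ T) : mrank 𝓘 S ≤ mrank 𝓘 T := by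
  apply Finset.sup_le
  intro Z hZ
  rw [Finset.mem_filter] at hZ
  exact Finset.le_sup (Finset.mem_filter.2 ⟨hZ.1, hZ.2.trans h⟩)

lemma card_le_mrank {Z S : Finset α} (hZ : Z ∈ 𝓘) (hZS : Z ⊆ S) : Z.card ≤ mrank 𝓘 S :=
  Finset.le_sup (Finset.mem_filter.2 ⟨hZ, hZS⟩)

lemma exists_mrank (h1 : ∅ ∈ 𝓘) (S : Finset α) :
    ∃ Z ∈ 𝓘, Z ⊆ S ∧ Z.card = mrank 𝓘 S := by
  obtain ⟨Z, hZ, hZc⟩ := Finset.exists_mem_eq_sup (𝓘.filter fun Z => Z ⊆ S)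
    ⟨∅, Finset.mem_filter.2 ⟨h1, Finset.empty_subset S⟩⟩ Finset.card
  rw [Finset.mem_filter] at hZ
  exact ⟨Z, hZ.1, hZ.2, hZc.symm⟩

lemma mrank_insert_le (h2 : ∀ Y ∈ 𝓘, ∀ Z : Finset α, Z ⊆ Y → Z ∈ 𝓘) (S : Finset α) (f : α) :
    mrank 𝓘 (insert f S) ≤ mrank 𝓘 S + 1 := by
  apply Finset.sup_le
  intro Z hZ
  rw [Finset.mem_filter] at hZ
  have hE : Z.erase f ∈ 𝓘 := h2 Z hZ.1 _ (Finset.erase_subset _ _)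
  have hES : Z.erase f ⊆ S := by
    intro x hx
    rw [Finset.mem_erase] at hx
    rcases Finset.mem_insert.1 (hZ.2 hx.2) with h | h
    · exact absurd h hx.1
    · exact h
  have h1 : Z.card ≤ (Z.erase f).card + 1 := by
    rcases Finset.decidableMem f Z with h | h
    · rw [Finset.erase_eq_of_notMem h]; omega
    · rw [Finset.card_erase_add_one h]
  exact h1.trans (Nat.add_le_add_right (card_le_mrank hE hES) 1)

end Aux


section Aux2
variable {α : Type*} [DecidableEq α] {𝓘 : Finset (Finset α)}
lemma mrank_step (h1 : ∅ ∈ 𝓘) (h2 : ∀ Y ∈ 𝓘, ∀ Z : Finset α, Z ⊆ Y → Z ∈ 𝓘)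
  (h3 : ∀ Y ∈ 𝓘, ∀ Z ∈ 𝓘, Y.card < Z.card → ∃ x ∈ Z \ Y, insert x Y ∈ 𝓘) {S : Finset α} {f : α} (hf : mrank 𝓘 (insert f S) = mrank 𝓘 S) (g : α) :
    mrank 𝓘 (insert f (insert g S)) = mrank 𝓘 (insert g S) := by
  refine le_antisymm ?_ (mrank_mono (Finset.subset_insert _ _))
  set s := mrank 𝓘 S with hs
  have hgle : mrank 𝓘 (insert g S) ≤ s + 1 := mrank_insert_le h2 S g
  have hgge : s ≤ mrank 𝓘 (insert g S) := mrank_mono (Finset.subset_insert _ _)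
  rcases eq_or_lt_of_le hgge with hg | hg
  · -- mrank (insert g S) = s
    by_contra hcon
    push_neg at hcon
    obtain ⟨W, hW, hWs, hWc⟩ := exists_mrank h1 (insert f (insert g S))
    obtain ⟨B, hB, hBs, hBc⟩ := exists_mrank h1 S
    have hcard : B.card < W.card := by omega
    obtain ⟨x, hx, hxB⟩ := h3 B hB W hW hcard
    rw [Finset.mem_sdiff] at hx
    have hxW := hWs hx.1
    have hcardB : (insert x B).card = s + 1 := by
      rw [Finset.card_insert_of_notMem hx.2, hBc]
    rcases Finset.mem_insert.1 hxW with h | h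
    · subst h
      have : s + 1 ≤ mrank 𝓘 (insert x S) :=
        hcardB ▸ card_le_mrank hxB (Finset.insert_subset_insert _ hBs)
      omega
    rcases Finset.mem_insert.1 h with h | h
    · subst h
      have : s + 1 ≤ mrank 𝓘 (insert x S) :=
        hcardB ▸ card_le_mrank hxB (Finset.insert_subset_insert _ hBs)
      omega
    · have : s + 1 ≤ s := by
        have := card_le_mrank hxB (Finset.insert_subset h hBs)
        omega
      omega
  · -- mrank (insert g S) = s + 1
    have hgeq : mrank 𝓘 (insert g S) = s + 1 := by omega
    apply Finset.sup_le
    intro W hW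
    rw [Finset.mem_filter] at hW
    have hWg : W.erase g ∈ 𝓘 := h2 W hW.1 _ (Finset.erase_subset _ _)
    have hWgs : W.erase g ⊆ insert f S := by
      intro x hx
      rw [Finset.mem_erase] at hx
      rcases Finset.mem_insert.1 (hW.2 hx.2) with h | h
      · exact Finset.mem_insert.2 (Or.inl h)
      rcases Finset.mem_insert.1 h with h | h
      · exact absurd h hx.1
      · exact Finset.mem_insert.2 (Or.inr h)
    have h1' : (W.erase g).card ≤ s := hf ▸ card_le_mrank hWg hWgs
    have h2' : W.card ≤ (W.erase g).card + 1 := by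
      rcases Finset.decidableMem g W with h | h
      · rw [Finset.erase_eq_of_notMem h]; omega
      · rw [Finset.card_erase_add_one h]
    omega

lemma mrank_insert_of_subset (h1 : ∅ ∈ 𝓘) (h2 : ∀ Y ∈ 𝓘, ∀ Z : Finset α, Z ⊆ Y → Z ∈ 𝓘)
  (h3 : ∀ Y ∈ 𝓘, ∀ Z ∈ 𝓘, Y.card < Z.card → ∃ x ∈ Z \ Y, insert x Y ∈ 𝓘) {T G : Finset α} {f : α} (hTG : T ⊆ G)
    (hf : mrank 𝓘 (insert f T) = mrank 𝓘 T) :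
    mrank 𝓘 (insert f G) = mrank 𝓘 G := by
  have key : ∀ D : Finset α, mrank 𝓘 (insert f (T ∪ D)) = mrank 𝓘 (T ∪ D) := by
    intro D
    induction D using Finset.induction_on with
    | empty => simpa using hf
    | @insert x D hx ih =>
        rw [Finset.union_insert]
        exact mrank_step h1 h2 h3 ih x
  have hG : T ∪ G = G := Finset.union_eq_right.2 hTG
  have := key G
  rwa [hG] at this
end Aux2


section Cl
variable {α : Type*} [Fintype α] [DecidableEq α] {𝓘 : Finset (Finset α)}
  (h1 : ∅ ∈ 𝓘) (h2 : ∀ Y ∈ 𝓘, ∀ Z : Finset α, Z ⊆ Y → Z ∈ 𝓘)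
  (h3 : ∀ Y ∈ 𝓘, ∀ Z ∈ 𝓘, Y.card < Z.card → ∃ x ∈ Z \ Y, insert x Y ∈ 𝓘)
include h1 h2 h3

omit h1 h2 h3 in
lemma subset_mclosure (T : Finset α) : T ⊆ mclosure 𝓘 T := by
  intro x hx
  rw [mclosure, Finset.mem_filter]
  exact ⟨Finset.mem_univ x, fun G _ hTG => hTG hx⟩

-- the element-wise flat membership lemma: if x has rank-preserving insertion into T,
-- then x belongs to every flat containing T
lemma mem_flat_of_rank_insert {T G : Finset α} {x : α} (hG : IsFlat 𝓘 G) (hTG : T ⊆ G)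
    (hx : mrank 𝓘 (insert x T) = mrank 𝓘 T) : x ∈ G := by
  obtain ⟨kk, hk, hmax⟩ := hG
  have hr : mrank 𝓘 (insert x G) = mrank 𝓘 G := mrank_insert_of_subset h1 h2 h3 hTG hx
  have := hmax (insert x G) (by rw [hr, hk]) (Finset.subset_insert _ _)
  rw [← this]
  exact Finset.mem_insert_self x G

lemma mclosure_eq_filter (T : Finset α) :
    mclosure 𝓘 T = Finset.univ.filter fun x => mrank 𝓘 (insert x T) = mrank 𝓘 T := by
  set G₀ : Finset α := Finset.univ.filter fun x => mrank 𝓘 (insert x T) = mrank 𝓘 T with hG₀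
  have hmem : ∀ x, x ∈ G₀ ↔ mrank 𝓘 (insert x T) = mrank 𝓘 T := by
    intro x; simp [hG₀]
  have hTsub : T ⊆ G₀ := by
    intro x hx
    rw [hmem]
    congr 1
    exact Finset.insert_eq_self.2 hx
  have hrank : mrank 𝓘 G₀ = mrank 𝓘 T := by
    have key : ∀ D : Finset α, (∀ x ∈ D, mrank 𝓘 (insert x T) = mrank 𝓘 T) →
        mrank 𝓘 (T ∪ D) = mrank 𝓘 T := by
      intro D
      induction D using Finset.induction_on with
      | empty => intro _; simp
      | @insert y D hy ih =>
          intro hall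
          rw [Finset.union_insert]
          have h1' : mrank 𝓘 (insert y (T ∪ D)) = mrank 𝓘 (T ∪ D) :=
            mrank_insert_of_subset h1 h2 h3 Finset.subset_union_left
              (hall y (Finset.mem_insert_self _ _))
          rw [h1', ih (fun x hx => hall x (Finset.mem_insert_of_mem hx))]
    have := key G₀ (fun x hx => (hmem x).1 hx)
    rwa [Finset.union_eq_right.2 hTsub] at this
  have hflat : IsFlat 𝓘 G₀ := by
    refine ⟨mrank 𝓘 T, hrank, fun W hW hGW => ?_⟩
    refine Finset.Subset.antisymm ?_ hGW
    intro x hx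
    rw [hmem]
    refine le_antisymm ?_ (mrank_mono (Finset.subset_insert _ _))
    calc mrank 𝓘 (insert x T) ≤ mrank 𝓘 W :=
          mrank_mono (Finset.insert_subset hx (hTsub.trans hGW))
      _ = mrank 𝓘 T := hW
  ext x
  rw [mclosure, Finset.mem_filter]
  constructor
  · intro hx
    exact hx.2 G₀ hflat hTsub
  · intro hx
    refine ⟨Finset.mem_univ x, fun G hG hTG => ?_⟩
    exact mem_flat_of_rank_insert h1 h2 h3 hG hTG ((hmem x).1 hx)

lemma mclosure_spec (T : Finset α) :
    IsFlat 𝓘 (mclosure 𝓘 T) ∧ mrank 𝓘 (mclosure 𝓘 T) = mrank 𝓘 T := by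
  rw [mclosure_eq_filter h1 h2 h3]
  set G₀ : Finset α := Finset.univ.filter fun x => mrank 𝓘 (insert x T) = mrank 𝓘 T with hG₀
  have hmem : ∀ x, x ∈ G₀ ↔ mrank 𝓘 (insert x T) = mrank 𝓘 T := by
    intro x; simp [hG₀]
  have hTsub : T ⊆ G₀ := by
    intro x hx
    rw [hmem]
    congr 1
    exact Finset.insert_eq_self.2 hx
  have hrank : mrank 𝓘 G₀ = mrank 𝓘 T := by
    have key : ∀ D : Finset α, (∀ x ∈ D, mrank 𝓘 (insert x T) = mrank 𝓘 T) →
        mrank 𝓘 (T ∪ D) = mrank 𝓘 T := by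
      intro D
      induction D using Finset.induction_on with
      | empty => intro _; simp
      | @insert y D hy ih =>
          intro hall
          rw [Finset.union_insert]
          have h1' : mrank 𝓘 (insert y (T ∪ D)) = mrank 𝓘 (T ∪ D) :=
            mrank_insert_of_subset h1 h2 h3 Finset.subset_union_left
              (hall y (Finset.mem_insert_self _ _))
          rw [h1', ih (fun x hx => hall x (Finset.mem_insert_of_mem hx))]
    have := key G₀ (fun x hx => (hmem x).1 hx)
    rwa [Finset.union_eq_right.2 hTsub] at this
  refine ⟨⟨mrank 𝓘 T, hrank, fun W hW hGW => ?_⟩, hrank⟩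
  refine Finset.Subset.antisymm ?_ hGW
  intro x hx
  rw [hmem]
  refine le_antisymm ?_ (mrank_mono (Finset.subset_insert _ _))
  calc mrank 𝓘 (insert x T) ≤ mrank 𝓘 W :=
        mrank_mono (Finset.insert_subset hx (hTsub.trans hGW))
    _ = mrank 𝓘 T := hW

omit h1 h2 h3 in
lemma mclosure_subset_of_flat {T G : Finset α} (hG : IsFlat 𝓘 G) (hTG : T ⊆ G) :
    mclosure 𝓘 T ⊆ G := by
  intro x hx
  rw [mclosure, Finset.mem_filter] at hx
  exact hx.2 G hG hTG

-- circuit lemma: if C is a circuit, f ∈ C, G a flat with C.erase f ⊆ G, then f ∈ G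
lemma mem_flat_of_circuit {C G : Finset α} {f : α} (hC : IsCircuitM 𝓘 C) (hfC : f ∈ C)
    (hG : IsFlat 𝓘 G) (hsub : C.erase f ⊆ G) : f ∈ G := by
  have hKind : C.erase f ∈ 𝓘 := by
    by_contra hcon
    have := hC.2 _ hcon (Finset.erase_subset _ _)
    rw [← this] at hfC
    exact (Finset.mem_erase.1 hfC).1 rfl
  have hrC : mrank 𝓘 C ≤ C.card - 1 := by
    obtain ⟨Z, hZ, hZC, hZc⟩ := exists_mrank h1 C
    have hne : Z ≠ C := fun h => hC.1 (h ▸ hZ)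
    have : Z.card < C.card := Finset.card_lt_card (Finset.ssubset_iff_subset_ne.2 ⟨hZC, hne⟩)
    omega
  have hrK : C.card - 1 ≤ mrank 𝓘 (C.erase f) := by
    have := card_le_mrank hKind (Finset.Subset.refl _)
    rwa [Finset.card_erase_of_mem hfC] at this
  have hins : insert f (C.erase f) = C := Finset.insert_erase hfC
  have hstep : mrank 𝓘 (insert f (C.erase f)) = mrank 𝓘 (C.erase f) := by
    rw [hins]
    have hle := mrank_mono (𝓘 := 𝓘) (Finset.erase_subset f C)
    omega
  exact mem_flat_of_rank_insert h1 h2 h3 hG hsub hstep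

end Cl


section Key
variable {k : Type*} [CommRing k] {α : Type*} [Fintype α] [DecidableEq α]
  {𝓘 : Finset (Finset α)}
  (h1 : ∅ ∈ 𝓘) (h2 : ∀ Y ∈ 𝓘, ∀ Z : Finset α, Z ⊆ Y → Z ∈ 𝓘)
  (h3 : ∀ Y ∈ 𝓘, ∀ Z ∈ 𝓘, Y.card < Z.card → ∃ x ∈ Z \ Y, insert x Y ∈ 𝓘)
  {X : Type*} [LinearOrder X] {ℓ : α → X}
  {𝔎 : Finset (Finset α)} (h𝔎 : ∀ K ∈ 𝔎, IsBrokenCircuitM 𝓘 ℓ K)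
  (a : Finset α → k)

include h1 h2 h3 h𝔎 in
lemma key_sum {G : Finset α} (hG : IsFlat 𝓘 G) :
    ∑ F ∈ G.powerset, (-1 : k) ^ F.card * ∏ K ∈ 𝔎.filter (fun K => K ⊆ F), a K =
      if G = ∅ then 1 else 0 := by
  rcases eq_or_ne G ∅ with rfl | hne
  · rw [if_pos rfl]
    have hfil : 𝔎.filter (fun K => K ⊆ (∅ : Finset α)) = ∅ := by
      rw [Finset.filter_eq_empty_iff]
      intro K hK hsub
      obtain ⟨C, e, hC, heC, _, hKeq⟩ := h𝔎 K hK
      have hKiff : ∀ x, x ∈ K ↔ x ≠ e ∧ x ∈ C := fun x => by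
        simp [hKeq, Finset.mem_erase]
      have hKe : C.erase e ⊆ (∅ : Finset α) := by
        intro x hx
        rw [Finset.mem_erase] at hx
        exact hsub ((hKiff x).2 hx)
      have := mem_flat_of_circuit h1 h2 h3 hC heC hG hKe
      exact absurd this (Finset.notMem_empty e)
    rw [Finset.powerset_empty, Finset.sum_singleton, Finset.card_empty, pow_zero, one_mul, hfil,
      Finset.prod_empty]
  · rw [if_neg hne]
    obtain ⟨e, heG, hemax⟩ := Finset.exists_max_image G ℓ (Finset.nonempty_iff_ne_empty.2 hne)
    have hins : insert e (G.erase e) = G := Finset.insert_erase heG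
    rw [← hins, Finset.sum_powerset_insert (Finset.notMem_erase e G)]
    have hterm : ∀ F ∈ (G.erase e).powerset,
        (-1 : k) ^ (insert e F).card * ∏ K ∈ 𝔎.filter (fun K => K ⊆ insert e F), a K =
        -((-1 : k) ^ F.card * ∏ K ∈ 𝔎.filter (fun K => K ⊆ F), a K) := by
      intro F hF
      rw [Finset.mem_powerset] at hF
      have heF : e ∉ F := fun h => Finset.notMem_erase e G (hF h)
      have hcard : (insert e F).card = F.card + 1 := Finset.card_insert_of_notMem heF
      have hfil : 𝔎.filter (fun K => K ⊆ insert e F) = 𝔎.filter (fun K => K ⊆ F) := by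
        apply Finset.filter_congr
        intro K hK
        constructor
        · intro hsub
          by_cases heK : e ∈ K
          · exfalso
            obtain ⟨C, f', hC, hf'C, hmax', hKeq⟩ := h𝔎 K hK
            have hKiff : ∀ x, x ∈ K ↔ x ≠ f' ∧ x ∈ C := fun x => by
              simp [hKeq, Finset.mem_erase]
            have hKG : K ⊆ G := by
              intro x hx
              rcases Finset.mem_insert.1 (hsub hx) with h | h
              · exact h ▸ heG
              · exact Finset.erase_subset _ _ (hF h)
            have hf'G : f' ∈ G := by
              refine mem_flat_of_circuit h1 h2 h3 hC hf'C hG ?_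
              intro x hx
              rw [Finset.mem_erase] at hx
              exact hKG ((hKiff x).2 hx)
            have hle : ℓ f' ≤ ℓ e := hemax f' hf'G
            have heC' := (hKiff e).1 heK
            have := hmax' e heC'.2 heC'.1
            exact absurd hle (not_le.2 this)
          · intro x hx
            rcases Finset.mem_insert.1 (hsub hx) with h | h
            · exact absurd (h ▸ hx) heK
            · exact h
        · intro hsub
          exact hsub.trans (Finset.subset_insert _ _)
      rw [hcard, hfil, pow_succ]
      ring
    rw [Finset.sum_congr rfl hterm, Finset.sum_neg_distrib]
    ring
end Key


/-- Let `M = (E, 𝓘)` be a matroid (ground set the whole finite type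
`α`), with `m = r_M(E)`; let `ℓ` be a labeling function, let `𝔎` be a set of broken
circuits of `M`, and let `a_K ∈ k` for each `K ∈ 𝔎`. Let `μ` be the Möbius function of
the poset of flats of `M`. Then, in `k[x]`, the image of the polynomial
`χ̃_M = [∅̄ = ∅] · ∑_{F flat} μ(∅̄, F) x^{m − r_M(F)}` under the canonical map
`ℤ[x] → k[x]` equals `∑_{F ⊆ E} (−1)^{|F|} (∏_{K ∈ 𝔎, K ⊆ F} a_K) x^{m − r_M(F)}`. -/
theorem matroid_charPoly_eq_weighted_sum_powerset
    (k : Type*) [CommRing k] {α : Type*} [Fintype α] [DecidableEq α]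
    (𝓘 : Finset (Finset α))
    (h1 : ∅ ∈ 𝓘)
    (h2 : ∀ Y ∈ 𝓘, ∀ Z : Finset α, Z ⊆ Y → Z ∈ 𝓘)
    (h3 : ∀ Y ∈ 𝓘, ∀ Z ∈ 𝓘, Y.card < Z.card → ∃ x ∈ Z \ Y, insert x Y ∈ 𝓘)
    {X : Type*} [LinearOrder X] (ℓ : α → X)
    (𝔎 : Finset (Finset α)) (h𝔎 : ∀ K ∈ 𝔎, IsBrokenCircuitM 𝓘 ℓ K)
    (a : Finset α → k)
    (μ : Finset α → Finset α → ℤ)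
    (hμ1 : ∀ T : Finset α, IsFlat 𝓘 T → μ T T = 1)
    (hμ2 : ∀ T S : Finset α, IsFlat 𝓘 T → IsFlat 𝓘 S → T ⊂ S →
      μ T S = -∑ Z ∈ Finset.univ.filter (fun Z : Finset α => IsFlat 𝓘 Z ∧ T ⊆ Z ∧ Z ⊂ S),
        μ T Z) :
    Polynomial.map (Int.castRingHom k)
      (if mclosure 𝓘 ∅ = (∅ : Finset α) then
          ∑ F ∈ Finset.univ.filter (fun F : Finset α => IsFlat 𝓘 F),
            Polynomial.C (μ (mclosure 𝓘 ∅) F) *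
              Polynomial.X ^ (mrank 𝓘 Finset.univ - mrank 𝓘 F)
        else 0) =
      ∑ F : Finset α,
        Polynomial.C ((-1 : k) ^ F.card * ∏ K ∈ 𝔎.filter (fun K => K ⊆ F), a K) *
          Polynomial.X ^ (mrank 𝓘 Finset.univ - mrank 𝓘 F) := by
  classical
  set c : Finset α → k := fun F => (-1 : k) ^ F.card * ∏ K ∈ 𝔎.filter (fun K => K ⊆ F), a K
    with hc
  set Flats : Finset (Finset α) := Finset.univ.filter (fun G : Finset α => IsFlat 𝓘 G)
    with hFlats
  set ν : Finset α → k := fun G => ∑ F ∈ Finset.univ.filter (fun F => mclosure 𝓘 F = G), c F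
    with hν
  set t : Finset α → k :=
    fun G => if mclosure 𝓘 ∅ = ∅ then ((μ (mclosure 𝓘 ∅) G : ℤ) : k) else 0 with ht
  have hmemFlats : ∀ G : Finset α, G ∈ Flats ↔ IsFlat 𝓘 G := by
    intro G; rw [hFlats]; simp
  -- split lemma
  have hsplit : ∀ G : Finset α, IsFlat 𝓘 G →
      Flats.filter (fun Z => Z ⊆ G) = insert G (Flats.filter (fun Z => Z ⊂ G)) := by
    intro G hG
    ext Z
    simp only [Finset.mem_filter, Finset.mem_insert]
    constructor
    · rintro ⟨hZF, hZG⟩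
      rcases eq_or_ne Z G with h | h
      · exact Or.inl h
      · exact Or.inr ⟨hZF, lt_of_le_of_ne hZG h⟩
    · rintro (rfl | ⟨hZF, hZG⟩)
      · exact ⟨(hmemFlats _).2 hG, Finset.Subset.refl _⟩
      · exact ⟨hZF, hZG.subset⟩
  have hGnotmem : ∀ G : Finset α, G ∉ Flats.filter (fun Z => Z ⊂ G) := by
    intro G h
    exact (lt_irrefl G) (Finset.mem_filter.1 h).2
  -- recursion for ν
  have nu_rec : ∀ G : Finset α, IsFlat 𝓘 G →
      ∑ Z ∈ Flats.filter (fun Z => Z ⊆ G), ν Z = if G = ∅ then 1 else 0 := by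
    intro G hG
    have hmaps : ∀ F ∈ G.powerset, mclosure 𝓘 F ∈ Flats.filter (fun Z => Z ⊆ G) := by
      intro F hF
      rw [Finset.mem_powerset] at hF
      rw [Finset.mem_filter]
      exact ⟨(hmemFlats _).2 (mclosure_spec h1 h2 h3 F).1, mclosure_subset_of_flat hG hF⟩
    have hfib := Finset.sum_fiberwise_of_maps_to hmaps c
    rw [← key_sum h1 h2 h3 h𝔎 a hG, ← hfib]
    apply Finset.sum_congr rfl
    intro Z hZ
    rw [Finset.mem_filter] at hZ
    rw [hν]
    apply Finset.sum_congr ?_ (fun _ _ => rfl)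
    ext F
    simp only [Finset.mem_filter, Finset.mem_univ, true_and, Finset.mem_powerset]
    constructor
    · intro h
      exact ⟨(subset_mclosure F).trans (h ▸ hZ.2), h⟩
    · exact fun h => h.2
  -- recursion for t
  have t_rec : ∀ G : Finset α, IsFlat 𝓘 G →
      ∑ Z ∈ Flats.filter (fun Z => Z ⊆ G), t Z = if G = ∅ then 1 else 0 := by
    intro G hG
    by_cases hcl : mclosure 𝓘 ∅ = ∅
    · have hflat0 : IsFlat 𝓘 (∅ : Finset α) := by
        have := (mclosure_spec h1 h2 h3 (∅ : Finset α)).1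
        rwa [hcl] at this
      have htZ : ∀ Z, t Z = ((μ (∅ : Finset α) Z : ℤ) : k) := by
        intro Z; rw [ht]; simp [hcl]
      rcases eq_or_ne G ∅ with rfl | hne
      · rw [if_pos rfl, hsplit ∅ hG, Finset.sum_insert (hGnotmem ∅)]
        have hempty : Flats.filter (fun Z => Z ⊂ (∅ : Finset α)) = ∅ := by
          rw [Finset.filter_eq_empty_iff]
          intro Z _
          simp
        rw [hempty, Finset.sum_empty, add_zero, htZ, hμ1 ∅ hflat0]
        simp
      · rw [if_neg hne, hsplit G hG, Finset.sum_insert (hGnotmem G)]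
        have hμG := hμ2 ∅ G hflat0 hG (Finset.ssubset_iff_subset_ne.2 ⟨Finset.empty_subset G, Ne.symm hne⟩)
        have hsets : Finset.univ.filter (fun Z : Finset α => IsFlat 𝓘 Z ∧ ∅ ⊆ Z ∧ Z ⊂ G) =
            Flats.filter (fun Z => Z ⊂ G) := by
          rw [hFlats, Finset.filter_filter]
          apply Finset.filter_congr
          intro Z _
          simp only [Finset.empty_subset, true_and]
        rw [htZ, hμG, hsets]
        push_cast
        rw [Finset.sum_congr rfl (fun Z _ => (htZ Z).symm)]
        ring
    · have htZ : ∀ Z, t Z = 0 := by intro Z; rw [ht]; simp only [if_neg hcl]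
      have hne : G ≠ ∅ := by
        rintro rfl
        exact hcl (Finset.subset_empty.1 (mclosure_subset_of_flat hG (Finset.empty_subset _)))
      rw [if_neg hne]
      rw [Finset.sum_congr rfl (fun Z _ => htZ Z)]
      simp
  -- ν = t on flats by strong induction on card
  have nu_eq_t : ∀ n : ℕ, ∀ G : Finset α, G.card ≤ n → IsFlat 𝓘 G → ν G = t G := by
    intro n
    induction n with
    | zero =>
        intro G hGc hG
        have hGe : G = ∅ := Finset.card_eq_zero.1 (Nat.le_zero.1 hGc)
        subst hGe
        have h1' := nu_rec ∅ hG
        have h2' := t_rec ∅ hG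
        rw [hsplit ∅ hG, Finset.sum_insert (hGnotmem ∅)] at h1' h2'
        have hempty : Flats.filter (fun Z => Z ⊂ (∅ : Finset α)) = ∅ := by
          rw [Finset.filter_eq_empty_iff]; intro Z _; simp
        rw [hempty, Finset.sum_empty, add_zero] at h1' h2'
        rw [h1', h2']
    | succ n ih =>
        intro G hGc hG
        have h1' := nu_rec G hG
        have h2' := t_rec G hG
        rw [hsplit G hG, Finset.sum_insert (hGnotmem G)] at h1' h2'
        have hZeq : ∀ Z ∈ Flats.filter (fun Z => Z ⊂ G), ν Z = t Z := by
          intro Z hZ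
          rw [Finset.mem_filter] at hZ
          have hclt : Z.card < G.card := Finset.card_lt_card hZ.2
          exact ih Z (by omega) ((hmemFlats Z).1 hZ.1)
        rw [Finset.sum_congr rfl hZeq] at h1'
        have := h1'.trans h2'.symm
        exact add_right_cancel this
  have nu_eq_t' : ∀ G : Finset α, IsFlat 𝓘 G → ν G = t G :=
    fun G hG => nu_eq_t G.card G le_rfl hG
  -- final assembly
  have hmaps2 : ∀ F ∈ (Finset.univ : Finset (Finset α)), mclosure 𝓘 F ∈ Flats := by
    intro F _
    exact (hmemFlats _).2 (mclosure_spec h1 h2 h3 F).1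
  have hfib := Finset.sum_fiberwise_of_maps_to hmaps2
    (fun F => Polynomial.C (c F) * Polynomial.X ^ (mrank 𝓘 Finset.univ - mrank 𝓘 F))
  rw [← hfib]
  have hinner : ∀ Z ∈ Flats,
      ∑ F ∈ Finset.univ.filter (fun F => mclosure 𝓘 F = Z),
        Polynomial.C (c F) * Polynomial.X ^ (mrank 𝓘 Finset.univ - mrank 𝓘 F) =
      Polynomial.C (t Z) * Polynomial.X ^ (mrank 𝓘 Finset.univ - mrank 𝓘 Z) := by
    intro Z hZ
    have hrank : ∀ F ∈ Finset.univ.filter (fun F => mclosure 𝓘 F = Z),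
        mrank 𝓘 F = mrank 𝓘 Z := by
      intro F hF
      rw [Finset.mem_filter] at hF
      rw [← hF.2]
      exact ((mclosure_spec h1 h2 h3 F).2).symm
    rw [Finset.sum_congr rfl (fun F hF => by rw [hrank F hF]), ← Finset.sum_mul,
      ← map_sum Polynomial.C c (Finset.univ.filter (fun F => mclosure 𝓘 F = Z))]
    have hnuZ : ∑ F ∈ Finset.univ.filter (fun F => mclosure 𝓘 F = Z), c F = ν Z := rfl
    rw [hnuZ, nu_eq_t' Z ((hmemFlats Z).1 hZ)]
  rw [Finset.sum_congr rfl hinner]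
  by_cases hcl : mclosure 𝓘 ∅ = ∅
  · rw [if_pos hcl]
    rw [Polynomial.map_sum]
    apply Finset.sum_congr rfl
    intro Z hZ
    rw [Polynomial.map_mul, Polynomial.map_C, Polynomial.map_pow, Polynomial.map_X]
    have : t Z = ((μ (mclosure 𝓘 ∅) Z : ℤ) : k) := by rw [ht]; simp [hcl]
    rw [this]
    rfl
  · rw [if_neg hcl, Polynomial.map_zero]
    symm
    apply Finset.sum_eq_zero
    intro Z hZ
    have : t Z = 0 := by rw [ht]; simp [hcl]
    rw [this, Polynomial.C_0, zero_mul]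
end
end

section
/- Let M=(E,𝓘) be a matroid with m = r_M(E), let X be a totally ordered set, and let ℓ : E → X be a labeling function. Then χ̃_M = Σ_{F ⊆ E, F contains no broken circuit of M as a subset} (−1)^{|F|} x^{m − r_M(F)} in ℤ[x]. -/
open scoped Classical

noncomputable section

namespace BC

variable {α : Type*} [DecidableEq α] {𝓘 : Finset (Finset α)}

lemma card_le_mrank {Z S : Finset α} (hZ : Z ∈ 𝓘) (hZS : Z ⊆ S) : Z.card ≤ mrank 𝓘 S :=
  Finset.le_sup (Finset.mem_filter.2 ⟨hZ, hZS⟩)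

lemma mrank_mono {S T : Finset α} (h : S ⊆ T) : mrank 𝓘 S ≤ mrank 𝓘 T :=
  Finset.sup_mono (by
    intro Z hZ
    simp only [Finset.mem_filter] at *
    exact ⟨hZ.1, hZ.2.trans h⟩)

lemma mrank_le_card (S : Finset α) : mrank 𝓘 S ≤ S.card :=
  Finset.sup_le fun Z hZ => Finset.card_le_card (Finset.mem_filter.1 hZ).2

lemma exists_basis (h1 : ∅ ∈ 𝓘) (S : Finset α) :
    ∃ Z ∈ 𝓘, Z ⊆ S ∧ Z.card = mrank 𝓘 S := by
  have hne : (𝓘.filter fun Z => Z ⊆ S).Nonempty :=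
    ⟨∅, Finset.mem_filter.2 ⟨h1, Finset.empty_subset _⟩⟩
  obtain ⟨Z, hZ, hsup⟩ := Finset.exists_mem_eq_sup _ hne Finset.card
  rw [Finset.mem_filter] at hZ
  exact ⟨Z, hZ.1, hZ.2, hsup.symm⟩

lemma mrank_eq_card_of_indep {Z : Finset α} (hZ : Z ∈ 𝓘) : mrank 𝓘 Z = Z.card :=
  le_antisymm (mrank_le_card Z) (card_le_mrank hZ (le_refl _))

lemma mrank_empty : mrank 𝓘 (∅ : Finset α) = 0 :=
  Nat.le_zero.1 ((mrank_le_card _).trans (by simp))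

lemma indep_of_mrank_eq_card (h1 : ∅ ∈ 𝓘) {S : Finset α} (h : mrank 𝓘 S = S.card) :
    S ∈ 𝓘 := by
  obtain ⟨Z, hZ, hZS, hcard⟩ := exists_basis h1 S
  have : Z = S := Finset.eq_of_subset_of_card_le hZS (by omega)
  exact this ▸ hZ


variable (h1 : ∅ ∈ 𝓘) (h2 : ∀ Y ∈ 𝓘, ∀ Z : Finset α, Z ⊆ Y → Z ∈ 𝓘)
  (h3 : ∀ Y ∈ 𝓘, ∀ Z ∈ 𝓘, Y.card < Z.card → ∃ x ∈ Z \ Y, insert x Y ∈ 𝓘)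

include h1 h3 in
lemma exists_basis_superset {Z S : Finset α} (hZ : Z ∈ 𝓘) (hZS : Z ⊆ S) :
    ∃ W ∈ 𝓘, Z ⊆ W ∧ W ⊆ S ∧ W.card = mrank 𝓘 S := by
  obtain ⟨B, hB, hBS, hBcard⟩ := exists_basis h1 S
  have hkey : ∀ n (Z : Finset α), Z ∈ 𝓘 → Z ⊆ S → mrank 𝓘 S - Z.card = n →
      ∃ W ∈ 𝓘, Z ⊆ W ∧ W ⊆ S ∧ W.card = mrank 𝓘 S := by
    intro n
    induction n with
    | zero =>
      intro Z hZ hZS hn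
      have hle : Z.card ≤ mrank 𝓘 S := card_le_mrank hZ hZS
      exact ⟨Z, hZ, le_refl _, hZS, by omega⟩
    | succ n ih =>
      intro Z hZ hZS hn
      have hlt : Z.card < B.card := by
        have := card_le_mrank hZ hZS; omega
      obtain ⟨x, hx, hins⟩ := h3 Z hZ B hB hlt
      have hxB : x ∈ B := (Finset.mem_sdiff.1 hx).1
      have hxZ : x ∉ Z := (Finset.mem_sdiff.1 hx).2
      obtain ⟨W, hW, hZW, hWS, hWc⟩ := ih (insert x Z) hins
        (Finset.insert_subset (hBS hxB) hZS)
        (by rw [Finset.card_insert_of_notMem hxZ]; omega)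
      exact ⟨W, hW, (Finset.subset_insert _ _).trans hZW, hWS, hWc⟩
  exact hkey _ Z hZ hZS rfl

include h1 h2 h3 in
lemma insert_rank_eq {B A : Finset α} {e : α} (hBA : B ⊆ A)
    (h : mrank 𝓘 (insert e B) = mrank 𝓘 B) : mrank 𝓘 (insert e A) = mrank 𝓘 A := by
  by_cases heB : e ∈ B
  · rw [Finset.insert_eq_self.2 (hBA heB)]
  refine le_antisymm ?_ (mrank_mono (Finset.subset_insert _ _))
  obtain ⟨Y, hY, hYB, hYcard⟩ := exists_basis h1 B
  obtain ⟨W, hW, hYW, hWS, hWc⟩ := exists_basis_superset h1 h3 hY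
    (hYB.trans ((hBA.trans (Finset.subset_insert e A))))
  have heW : e ∉ W := by
    intro heW
    have hiY : insert e Y ∈ 𝓘 := h2 W hW _ (Finset.insert_subset heW hYW)
    have : (insert e Y).card ≤ mrank 𝓘 (insert e B) :=
      card_le_mrank hiY (Finset.insert_subset_insert _ hYB)
    rw [Finset.card_insert_of_notMem (fun hc => heB (hYB hc)), h, hYcard] at this
    omega
  have hWA : W ⊆ A := fun x hx => by
    rcases Finset.mem_insert.1 (hWS hx) with h' | h'
    · exact absurd (h' ▸ hx) heW
    · exact h'
  calc mrank 𝓘 (insert e A) = W.card := hWc.symm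
    _ ≤ mrank 𝓘 A := card_le_mrank hW hWA

include h1 h2 h3 in
lemma union_rank_eq {S T : Finset α}
    (h : ∀ x ∈ T, mrank 𝓘 (insert x S) = mrank 𝓘 S) : mrank 𝓘 (S ∪ T) = mrank 𝓘 S := by
  induction T using Finset.induction_on with
  | empty => rw [Finset.union_empty]
  | @insert a T ha ih =>
    have hST : mrank 𝓘 (S ∪ T) = mrank 𝓘 S := ih fun x hx => h x (Finset.mem_insert_of_mem hx)
    rw [Finset.union_insert, insert_rank_eq h1 h2 h3 Finset.subset_union_left
      (h a (Finset.mem_insert_self a T))]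
    exact hST


section Closure
variable [Fintype α]

def clr (𝓘 : Finset (Finset α)) (S : Finset α) : Finset α :=
  Finset.univ.filter fun x => mrank 𝓘 (insert x S) = mrank 𝓘 S

lemma mem_clr {S : Finset α} {x : α} : x ∈ clr 𝓘 S ↔ mrank 𝓘 (insert x S) = mrank 𝓘 S := by
  simp [clr]

lemma subset_clr (S : Finset α) : S ⊆ clr 𝓘 S := fun x hx =>
  mem_clr.2 (by rw [Finset.insert_eq_self.2 hx])

include h1 h2 h3 in
lemma mrank_clr (S : Finset α) : mrank 𝓘 (clr 𝓘 S) = mrank 𝓘 S := by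
  have : S ∪ clr 𝓘 S = clr 𝓘 S := Finset.union_eq_right.2 (subset_clr S)
  rw [← this]
  exact union_rank_eq h1 h2 h3 fun x hx => mem_clr.1 hx

include h1 h2 h3 in
lemma clr_isFlat (S : Finset α) : IsFlat 𝓘 (clr 𝓘 S) := by
  refine ⟨mrank 𝓘 S, mrank_clr h1 h2 h3 S, fun W hW hsub => ?_⟩
  refine Finset.Subset.antisymm (fun x hx => mem_clr.2 ?_) hsub
  have hSW : S ⊆ W := (subset_clr S).trans hsub
  have h1' : mrank 𝓘 (insert x S) ≤ mrank 𝓘 W := mrank_mono (Finset.insert_subset hx hSW)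
  have h2' : mrank 𝓘 S ≤ mrank 𝓘 (insert x S) := mrank_mono (Finset.subset_insert _ _)
  omega

include h1 h2 h3 in
lemma clr_subset_of_flat {S T : Finset α} (hT : IsFlat 𝓘 T) (hST : S ⊆ T) :
    clr 𝓘 S ⊆ T := by
  obtain ⟨k, hk, hmax⟩ := hT
  have hr : mrank 𝓘 (T ∪ clr 𝓘 S) = mrank 𝓘 T := by
    refine union_rank_eq h1 h2 h3 fun x hx => ?_
    exact insert_rank_eq h1 h2 h3 hST (mem_clr.1 hx)
  have := hmax (T ∪ clr 𝓘 S) (by rw [hr, hk]) Finset.subset_union_left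
  rw [← this]
  exact Finset.subset_union_right

include h1 h2 h3 in
lemma mclosure_eq_clr (S : Finset α) : mclosure 𝓘 S = clr 𝓘 S := by
  ext x
  simp only [mclosure, Finset.mem_filter, Finset.mem_univ, true_and]
  constructor
  · intro h
    exact h _ (clr_isFlat h1 h2 h3 S) (subset_clr S)
  · intro hx G hG hSG
    exact clr_subset_of_flat h1 h2 h3 hG hSG hx

include h1 h2 h3 in
lemma clr_mono {S T : Finset α} (h : S ⊆ T) : clr 𝓘 S ⊆ clr 𝓘 T := fun x hx =>
  mem_clr.2 (insert_rank_eq h1 h2 h3 h (mem_clr.1 hx))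

include h1 h2 h3 in
lemma clr_flat_self {T : Finset α} (hT : IsFlat 𝓘 T) : clr 𝓘 T = T :=
  Finset.Subset.antisymm (clr_subset_of_flat h1 h2 h3 hT (le_refl _)) (subset_clr T)

end Closure

section Circuit

lemma circuit_erase_indep {C : Finset α} (hC : IsCircuitM 𝓘 C) {e : α} (he : e ∈ C) :
    C.erase e ∈ 𝓘 := by
  by_contra h
  exact absurd (hC.2 _ h (Finset.erase_subset _ _)) (by simp [Finset.erase_eq_self, he])

include h1 in
lemma circuit_rank {C : Finset α} (hC : IsCircuitM 𝓘 C) {e : α} (he : e ∈ C) :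
    mrank 𝓘 (insert e (C.erase e)) = mrank 𝓘 (C.erase e) := by
  rw [Finset.insert_erase he]
  have hind : C.erase e ∈ 𝓘 := circuit_erase_indep hC he
  have h1' : mrank 𝓘 (C.erase e) = C.card - 1 := by
    rw [mrank_eq_card_of_indep hind, Finset.card_erase_of_mem he]
  have h2' : mrank 𝓘 C ≤ C.card := mrank_le_card C
  have h3' : mrank 𝓘 C ≠ C.card := fun h => hC.1 (indep_of_mrank_eq_card h1 h)
  have h4' : mrank 𝓘 (C.erase e) ≤ mrank 𝓘 C := mrank_mono (Finset.erase_subset _ _)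
  have h5' : 1 ≤ C.card := Finset.card_pos.2 ⟨e, he⟩
  omega

end Circuit

end BC

namespace BC

variable {α : Type*} [DecidableEq α] [Fintype α] {𝓘 : Finset (Finset α)}
  {X : Type*} [LinearOrder X] {ℓ : α → X}
  (h1 : ∅ ∈ 𝓘) (h2 : ∀ Y ∈ 𝓘, ∀ Z : Finset α, Z ⊆ Y → Z ∈ 𝓘)
  (h3 : ∀ Y ∈ 𝓘, ∀ Z ∈ 𝓘, Y.card < Z.card → ∃ x ∈ Z \ Y, insert x Y ∈ 𝓘)

section Involution

variable (𝓘 ℓ) in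
/-- witnesses: elements completing a broken circuit contained in `S`. -/
def Wit (S : Finset α) : Finset α :=
  Finset.univ.filter fun e => ∃ C, IsCircuitM 𝓘 C ∧ e ∈ C ∧
    (∀ e' ∈ C, e' ≠ e → ℓ e' < ℓ e) ∧ C.erase e ⊆ S

lemma erase_eq_erase (i1 i2 : DecidableEq α) (C : Finset α) (e : α) :
    @Finset.erase α i1 C e = @Finset.erase α i2 C e := by
  ext x
  rw [@Finset.mem_erase α i1, @Finset.mem_erase α i2]

lemma mem_Wit {S : Finset α} {e : α} : e ∈ Wit 𝓘 ℓ S ↔ ∃ C, IsCircuitM 𝓘 C ∧ e ∈ C ∧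
    (∀ e' ∈ C, e' ≠ e → ℓ e' < ℓ e) ∧ C.erase e ⊆ S := by
  simp [Wit]

lemma Wit_mono {S T : Finset α} (h : S ⊆ T) : Wit 𝓘 ℓ S ⊆ Wit 𝓘 ℓ T := by
  intro e he
  obtain ⟨C, hC, heC, hmax, hsub⟩ := mem_Wit.1 he
  exact mem_Wit.2 ⟨C, hC, heC, hmax, hsub.trans h⟩

variable (𝓘 ℓ) in
def BadS (S : Finset α) : Prop := ∃ K, IsBrokenCircuitM 𝓘 ℓ K ∧ K ⊆ S

lemma badS_iff_wit {S : Finset α} : BadS 𝓘 ℓ S ↔ (Wit 𝓘 ℓ S).Nonempty := by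
  constructor
  · rintro ⟨K, ⟨C, e, hC, heC, hmax, rfl⟩, hKS⟩
    exact ⟨e, mem_Wit.2 ⟨C, hC, heC, hmax, (erase_eq_erase _ _ C e) ▸ hKS⟩⟩
  · rintro ⟨e, he⟩
    obtain ⟨C, hC, heC, hmax, hsub⟩ := mem_Wit.1 he
    exact ⟨C.erase e, ⟨C, e, hC, heC, hmax, erase_eq_erase _ _ C e⟩, (erase_eq_erase _ _ C e) ▸ hsub⟩

def tog (S : Finset α) (e : α) : Finset α := if e ∈ S then S.erase e else insert e S

lemma tog_tog (S : Finset α) (e : α) : tog (tog S e) e = S := by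
  unfold tog
  by_cases he : e ∈ S
  · simp [he, Finset.insert_erase he]
  · simp [he, Finset.erase_insert he]

variable {β : Type*} [LinearOrder β] {ord : α → β}

section withOrd
variable (hinj : Function.Injective ord) (hord : ∀ a b : α, ℓ a < ℓ b → ord a < ord b)

variable (ord) in
noncomputable def pick (S : Finset α) (hS : (Wit 𝓘 ℓ S).Nonempty) : α :=
  (Finset.exists_min_image (Wit 𝓘 ℓ S) ord hS).choose

lemma pick_mem (S : Finset α) (hS : (Wit 𝓘 ℓ S).Nonempty) : pick ord S hS ∈ Wit 𝓘 ℓ S :=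
  (Finset.exists_min_image (Wit 𝓘 ℓ S) ord hS).choose_spec.1

lemma pick_min (S : Finset α) (hS : (Wit 𝓘 ℓ S).Nonempty) :
    ∀ f ∈ Wit 𝓘 ℓ S, ord (pick ord S hS) ≤ ord f :=
  (Finset.exists_min_image (Wit 𝓘 ℓ S) ord hS).choose_spec.2

lemma pick_mem_tog (S : Finset α) (hS : (Wit 𝓘 ℓ S).Nonempty) :
    pick ord S hS ∈ Wit 𝓘 ℓ (tog S (pick ord S hS)) := by
  set e := pick ord S hS with hedef
  obtain ⟨C, hC, heC, hmax, hsub⟩ := mem_Wit.1 (pick_mem (ord := ord) S hS)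
  unfold tog
  by_cases he : e ∈ S
  · simp only [he, if_true]
    refine mem_Wit.2 ⟨C, hC, heC, hmax, fun x hx => ?_⟩
    exact Finset.mem_erase.2 ⟨Finset.ne_of_mem_erase hx, hsub hx⟩
  · simp only [he, if_false]
    exact mem_Wit.2 ⟨C, hC, heC, hmax, hsub.trans (Finset.subset_insert _ _)⟩

include hord in
lemma pick_min_tog (S : Finset α) (hS : (Wit 𝓘 ℓ S).Nonempty) :
    ∀ f ∈ Wit 𝓘 ℓ (tog S (pick ord S hS)), ord (pick ord S hS) ≤ ord f := by
  set e := pick ord S hS with hedef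
  intro f hf
  unfold tog at hf
  by_cases he : e ∈ S
  · simp only [he, if_true] at hf
    exact pick_min S hS f (Wit_mono (Finset.erase_subset _ _) hf)
  · simp only [he, if_false] at hf
    obtain ⟨D, hD, hfD, hmax, hsub⟩ := mem_Wit.1 hf
    by_cases hDS : D.erase f ⊆ S
    · exact pick_min S hS f (mem_Wit.2 ⟨D, hD, hfD, hmax, hDS⟩)
    · obtain ⟨y, hy, hyS⟩ := Finset.not_subset.1 hDS
      have hye : y = e := by
        rcases Finset.mem_insert.1 (hsub hy) with h | h
        · exact h
        · exact absurd h hyS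
      have hyne : y ≠ f := Finset.ne_of_mem_erase hy
      have hlf : ℓ y < ℓ f := hmax y (Finset.mem_of_mem_erase hy) hyne
      rw [← hye]
      exact le_of_lt (hord _ _ hlf)

include hinj hord in
lemma pick_tog (S : Finset α) (hS : (Wit 𝓘 ℓ S).Nonempty)
    (hS' : (Wit 𝓘 ℓ (tog S (pick ord S hS))).Nonempty) :
    pick ord (tog S (pick ord S hS)) hS' = pick ord S hS := by
  apply hinj
  refine le_antisymm ?_ ?_
  · exact pick_min _ hS' _ (pick_mem_tog S hS)
  · exact pick_min_tog hord S hS _ (pick_mem _ hS')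

end withOrd

include h1 h2 h3 in
lemma mrank_tog_pick {β : Type*} [LinearOrder β] {ord : α → β}
    (S : Finset α) (hS : (Wit 𝓘 ℓ S).Nonempty) :
    mrank 𝓘 (tog S (pick ord S hS)) = mrank 𝓘 S := by
  set e := pick ord S hS with hedef
  obtain ⟨C, hC, heC, hmax, hsub⟩ := mem_Wit.1 (pick_mem (ord := ord) S hS)
  have hrk : mrank 𝓘 (insert e (C.erase e)) = mrank 𝓘 (C.erase e) := circuit_rank h1 hC heC
  unfold tog
  by_cases he : e ∈ S
  · simp only [he, if_true]
    have hsub' : C.erase e ⊆ S.erase e := fun x hx =>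
      Finset.mem_erase.2 ⟨Finset.ne_of_mem_erase hx, hsub hx⟩
    have := insert_rank_eq h1 h2 h3 hsub' hrk
    rw [Finset.insert_erase he] at this
    exact this.symm
  · simp only [he, if_false]
    exact insert_rank_eq h1 h2 h3 hsub hrk

include h1 h2 h3 in
lemma sum_bad_eq_zero {β : Type*} [LinearOrder β] (ord : α → β)
    (hinj : Function.Injective ord) (hord : ∀ a b : α, ℓ a < ℓ b → ord a < ord b) (m : ℕ) :
    ∑ S ∈ Finset.univ.filter (BadS 𝓘 ℓ),
      (-1 : Polynomial ℤ) ^ S.card * Polynomial.X ^ (m - mrank 𝓘 S) = 0 := by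
  have hwit : ∀ S : Finset α, S ∈ Finset.univ.filter (BadS 𝓘 ℓ) → (Wit 𝓘 ℓ S).Nonempty :=
    fun S hS => badS_iff_wit.1 (Finset.mem_filter.1 hS).2
  apply Finset.sum_involution (fun S hS => tog S (pick ord S (hwit S hS)))
  · intro S hS
    set e := pick ord S (hwit S hS) with hedef
    have hrk : mrank 𝓘 (tog S e) = mrank 𝓘 S := mrank_tog_pick h1 h2 h3 S (hwit S hS)
    rw [hrk]
    unfold tog
    by_cases he : e ∈ S
    · simp only [he, if_true]
      have : S.card = (S.erase e).card + 1 := (Finset.card_erase_add_one he).symm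
      rw [this, pow_succ]
      ring
    · simp only [he, if_false]
      rw [Finset.card_insert_of_notMem he, pow_succ]
      ring
  · intro S hS _
    set e := pick ord S (hwit S hS) with hedef
    unfold tog
    by_cases he : e ∈ S
    · simp only [he, if_true]
      intro hc
      have := Finset.card_erase_add_one he
      rw [hc] at this
      omega
    · simp only [he, if_false]
      intro hc
      have := Finset.card_insert_of_notMem he
      rw [hc] at this
      omega
  · intro S hS
    have key : ∀ (h' : (Wit 𝓘 ℓ (tog S (pick ord S (hwit S hS)))).Nonempty),
        tog (tog S (pick ord S (hwit S hS))) (pick ord _ h') = S := by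
      intro h'
      rw [pick_tog hinj hord S (hwit S hS) h']
      exact tog_tog S _
    exact key _
  · intro S hS
    refine Finset.mem_filter.2 ⟨Finset.mem_univ _, badS_iff_wit.2 ?_⟩
    exact ⟨_, pick_mem_tog (ord := ord) S (hwit S hS)⟩

end Involution

section Mobius

variable (𝓘) in
def flats : Finset (Finset α) := Finset.univ.filter (IsFlat 𝓘)

variable (𝓘) in
def fS (G : Finset α) : ℤ :=
  ∑ S ∈ Finset.univ.filter (fun S : Finset α => clr 𝓘 S = G), (-1 : ℤ) ^ S.card

lemma split_flats_subset (u : Finset α → ℤ) {F : Finset α} (hF : IsFlat 𝓘 F) :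
    ∑ G ∈ (flats 𝓘).filter (· ⊆ F), u G
      = u F + ∑ G ∈ (flats 𝓘).filter (· ⊂ F), u G := by
  have hset : (flats 𝓘).filter (· ⊆ F) = insert F ((flats 𝓘).filter (· ⊂ F)) := by
    ext G
    simp only [Finset.mem_filter, Finset.mem_insert, flats, Finset.mem_univ, true_and]
    constructor
    · rintro ⟨hG, hsub⟩
      rcases eq_or_ne G F with h | h
      · exact Or.inl h
      · exact Or.inr ⟨hG, Finset.ssubset_iff_subset_ne.2 ⟨hsub, h⟩⟩
    · rintro (rfl | ⟨hG, hss⟩)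
      · exact ⟨hF, le_refl _⟩
      · exact ⟨hG, hss.subset⟩
  rw [hset]
  exact Finset.sum_insert (fun h => (ssubset_irrefl F) (Finset.mem_filter.1 h).2)

include h1 h2 h3 in
lemma sum_f_flats {F : Finset α} (hF : IsFlat 𝓘 F) :
    ∑ G ∈ (flats 𝓘).filter (· ⊆ F), fS 𝓘 G = if F = ∅ then 1 else 0 := by
  have hmaps : ∀ S ∈ F.powerset, clr 𝓘 S ∈ (flats 𝓘).filter (· ⊆ F) := by
    intro S hS
    refine Finset.mem_filter.2 ⟨Finset.mem_filter.2 ⟨Finset.mem_univ _,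
      clr_isFlat h1 h2 h3 S⟩, ?_⟩
    calc clr 𝓘 S ⊆ clr 𝓘 F := clr_mono h1 h2 h3 (Finset.mem_powerset.1 hS)
      _ = F := clr_flat_self h1 h2 h3 hF
  have hfib := Finset.sum_fiberwise_of_maps_to hmaps (fun S => (-1 : ℤ) ^ S.card)
  rw [← Finset.sum_powerset_neg_one_pow_card, ← hfib]
  refine Finset.sum_congr rfl fun G hG => ?_
  obtain ⟨hGfl, hGF⟩ := Finset.mem_filter.1 hG
  unfold fS
  refine Finset.sum_congr ?_ (fun _ _ => rfl)
  ext S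
  simp only [Finset.mem_filter, Finset.mem_univ, true_and, Finset.mem_powerset]
  constructor
  · intro hclr
    exact ⟨((subset_clr S).trans (hclr ▸ hGF)), hclr⟩
  · exact fun h => h.2

variable {μ : Finset α → Finset α → ℤ}
  (hμ1 : ∀ T : Finset α, IsFlat 𝓘 T → μ T T = 1)
  (hμ2 : ∀ T S : Finset α, IsFlat 𝓘 T → IsFlat 𝓘 S → T ⊂ S →
    μ T S = -∑ Z ∈ Finset.univ.filter (fun Z : Finset α => IsFlat 𝓘 Z ∧ T ⊆ Z ∧ Z ⊂ S),
      μ T Z)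

include h1 h2 h3 in
lemma empty_isFlat (h0 : clr 𝓘 (∅ : Finset α) = ∅) : IsFlat 𝓘 (∅ : Finset α) :=
  h0 ▸ clr_isFlat h1 h2 h3 ∅

lemma filter_subset_empty_eq (h0' : IsFlat 𝓘 (∅ : Finset α)) :
    (flats 𝓘).filter (· ⊆ (∅ : Finset α)) = {∅} := by
  ext G
  simp only [Finset.mem_filter, Finset.mem_singleton, flats, Finset.mem_univ, true_and,
    Finset.subset_empty]
  exact ⟨fun h => h.2, fun h => ⟨h ▸ h0', h⟩⟩

include h1 h2 h3 hμ1 hμ2 in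
lemma sum_mu_flats (h0 : clr 𝓘 (∅ : Finset α) = ∅) {F : Finset α} (hF : IsFlat 𝓘 F) :
    ∑ G ∈ (flats 𝓘).filter (· ⊆ F), μ ∅ G = if F = ∅ then 1 else 0 := by
  have h0' : IsFlat 𝓘 (∅ : Finset α) := empty_isFlat h1 h2 h3 h0
  by_cases hFe : F = ∅
  · subst hFe
    rw [filter_subset_empty_eq h0', Finset.sum_singleton, hμ1 ∅ h0', if_pos rfl]
  · rw [if_neg hFe, split_flats_subset _ hF,
      hμ2 ∅ F h0' hF (Finset.ssubset_iff_subset_ne.2 ⟨Finset.empty_subset F, Ne.symm hFe⟩)]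
    have hseteq : Finset.univ.filter (fun Z : Finset α => IsFlat 𝓘 Z ∧ ∅ ⊆ Z ∧ Z ⊂ F)
        = (flats 𝓘).filter (· ⊂ F) := by
      ext G
      simp [flats, Finset.empty_subset, and_assoc]
    rw [hseteq]
    ring

include h1 h2 h3 hμ1 hμ2 in
lemma mu_eq_f (h0 : clr 𝓘 (∅ : Finset α) = ∅) :
    ∀ F : Finset α, IsFlat 𝓘 F → μ ∅ F = fS 𝓘 F := by
  have h0' : IsFlat 𝓘 (∅ : Finset α) := empty_isFlat h1 h2 h3 h0
  suffices H : ∀ n : ℕ, ∀ F : Finset α, IsFlat 𝓘 F → F.card ≤ n → μ ∅ F = fS 𝓘 F by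
    exact fun F hF => H F.card F hF le_rfl
  intro n
  induction n with
  | zero =>
    intro F hF hc
    have hFe : F = ∅ := Finset.card_eq_zero.1 (Nat.le_zero.1 hc)
    subst hFe
    have e1 := sum_f_flats h1 h2 h3 hF
    rw [filter_subset_empty_eq h0', Finset.sum_singleton, if_pos rfl] at e1
    rw [hμ1 ∅ h0', e1]
  | succ n ih =>
    intro F hF hc
    have e1 := sum_f_flats h1 h2 h3 hF
    have e2 := sum_mu_flats h1 h2 h3 hμ1 hμ2 h0 hF
    rw [split_flats_subset _ hF] at e1 e2
    have e3 : ∑ G ∈ (flats 𝓘).filter (· ⊂ F), μ ∅ G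
        = ∑ G ∈ (flats 𝓘).filter (· ⊂ F), fS 𝓘 G := by
      refine Finset.sum_congr rfl fun G hG => ?_
      obtain ⟨hGfl, hGF⟩ := Finset.mem_filter.1 hG
      have hGfl' : IsFlat 𝓘 G := (Finset.mem_filter.1 hGfl).2
      have : G.card < F.card := Finset.card_lt_card hGF
      exact ih G hGfl' (by omega)
    rw [e3] at e2
    linarith

include h1 h2 h3 hμ1 hμ2 in
lemma lhs_eq_sum_all (h0 : clr 𝓘 (∅ : Finset α) = ∅) (m : ℕ) :
    ∑ F ∈ flats 𝓘, Polynomial.C (μ ∅ F) * Polynomial.X ^ (m - mrank 𝓘 F)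
      = ∑ S ∈ (Finset.univ : Finset (Finset α)),
          (-1 : Polynomial ℤ) ^ S.card * Polynomial.X ^ (m - mrank 𝓘 S) := by
  have hmaps : ∀ S ∈ (Finset.univ : Finset (Finset α)), clr 𝓘 S ∈ flats 𝓘 :=
    fun S _ => Finset.mem_filter.2 ⟨Finset.mem_univ _, clr_isFlat h1 h2 h3 S⟩
  rw [← Finset.sum_fiberwise_of_maps_to hmaps
    (fun S => (-1 : Polynomial ℤ) ^ S.card * Polynomial.X ^ (m - mrank 𝓘 S))]
  refine Finset.sum_congr rfl fun F hF => ?_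
  have hFfl : IsFlat 𝓘 F := (Finset.mem_filter.1 hF).2
  rw [mu_eq_f h1 h2 h3 hμ1 hμ2 h0 F hFfl]
  unfold fS
  rw [map_sum, Finset.sum_mul]
  refine Finset.sum_congr rfl fun S hS => ?_
  have hclr : clr 𝓘 S = F := (Finset.mem_filter.1 hS).2
  have hrank : mrank 𝓘 S = mrank 𝓘 F := by
    rw [← hclr, mrank_clr h1 h2 h3]
  rw [hrank, map_pow, map_neg, map_one]

end Mobius

end BC

/-- Let `M = (E, 𝓘)` be a matroid (ground set the whole finite type
`α`), with `m = r_M(E)`, and let `ℓ` be a labeling function. Let `μ` be the Möbius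
function of the poset of flats of `M`. Then the polynomial
`χ̃_M = [∅̄ = ∅] · ∑_{F flat} μ(∅̄, F) x^{m − r_M(F)}` satisfies
`χ̃_M = ∑_{F ⊆ E, F contains no broken circuit of M} (−1)^{|F|} x^{m − r_M(F)}`
in `ℤ[x]`. -/
theorem matroid_charPoly_eq_sum_no_broken_circuit
    {α : Type*} [Fintype α] [DecidableEq α]
    (𝓘 : Finset (Finset α))
    (h1 : ∅ ∈ 𝓘)
    (h2 : ∀ Y ∈ 𝓘, ∀ Z : Finset α, Z ⊆ Y → Z ∈ 𝓘)
    (h3 : ∀ Y ∈ 𝓘, ∀ Z ∈ 𝓘, Y.card < Z.card → ∃ x ∈ Z \ Y, insert x Y ∈ 𝓘)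
    {X : Type*} [LinearOrder X] (ℓ : α → X)
    (μ : Finset α → Finset α → ℤ)
    (hμ1 : ∀ T : Finset α, IsFlat 𝓘 T → μ T T = 1)
    (hμ2 : ∀ T S : Finset α, IsFlat 𝓘 T → IsFlat 𝓘 S → T ⊂ S →
      μ T S = -∑ Z ∈ Finset.univ.filter (fun Z : Finset α => IsFlat 𝓘 Z ∧ T ⊆ Z ∧ Z ⊂ S),
        μ T Z) :
    (if mclosure 𝓘 ∅ = (∅ : Finset α) then
        ∑ F ∈ Finset.univ.filter (fun F : Finset α => IsFlat 𝓘 F),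
          Polynomial.C (μ (mclosure 𝓘 ∅) F) *
            Polynomial.X ^ (mrank 𝓘 Finset.univ - mrank 𝓘 F)
      else 0) =
      ∑ F ∈ Finset.univ.filter
          (fun F : Finset α => ∀ K, IsBrokenCircuitM 𝓘 ℓ K → ¬ K ⊆ F),
        (-1 : Polynomial ℤ) ^ F.card *
          Polynomial.X ^ (mrank 𝓘 Finset.univ - mrank 𝓘 F) := by
  classical
  have hclos : mclosure 𝓘 ∅ = BC.clr 𝓘 ∅ := BC.mclosure_eq_clr h1 h2 h3 ∅
  set m := mrank 𝓘 (Finset.univ : Finset α) with hm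
  by_cases h0 : mclosure 𝓘 ∅ = (∅ : Finset α)
  · rw [if_pos h0, h0]
    have h0' : BC.clr 𝓘 (∅ : Finset α) = ∅ := hclos ▸ h0
    -- the labeling order
    set n := Fintype.card α with hn
    set eqv := Fintype.equivFin α with heqv
    set ord : α → Lex (X × Fin n) := fun a => toLex (ℓ a, eqv a) with hord_def
    have hinj : Function.Injective ord := by
      intro a b h
      have : (ℓ a, eqv a) = (ℓ b, eqv b) := toLex.injective h
      exact eqv.injective (congrArg Prod.snd this)
    have hord : ∀ a b : α, ℓ a < ℓ b → ord a < ord b := by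
      intro a b h
      rw [hord_def]
      rw [Prod.Lex.lt_iff]
      exact Or.inl h
    have key := BC.lhs_eq_sum_all h1 h2 h3 hμ1 hμ2 h0' m
    have hflats : (BC.flats 𝓘) = Finset.univ.filter (fun F : Finset α => IsFlat 𝓘 F) := rfl
    rw [hflats] at key
    rw [key]
    have hsplit := Finset.sum_filter_add_sum_filter_not (Finset.univ : Finset (Finset α))
      (BC.BadS 𝓘 ℓ)
      (fun S => (-1 : Polynomial ℤ) ^ S.card * Polynomial.X ^ (m - mrank 𝓘 S))
    rw [← hsplit, BC.sum_bad_eq_zero h1 h2 h3 ord hinj hord m, zero_add]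
    refine Finset.sum_congr ?_ (fun _ _ => rfl)
    ext F
    simp only [Finset.mem_filter, Finset.mem_univ, true_and, BC.BadS, not_exists, not_and]
  · rw [if_neg h0]
    have h0' : BC.clr 𝓘 (∅ : Finset α) ≠ ∅ := fun h => h0 (hclos.trans h)
    obtain ⟨x, hx⟩ := Finset.nonempty_iff_ne_empty.2 h0'
    have hrx : mrank 𝓘 {x} = 0 := by
      have := BC.mem_clr.1 hx
      have h' : insert x (∅ : Finset α) = {x} := rfl
      rw [h'] at this
      rw [this, BC.mrank_empty]
    have hxnotind : ({x} : Finset α) ∉ 𝓘 := by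
      intro h
      rw [BC.mrank_eq_card_of_indep h, Finset.card_singleton] at hrx
      omega
    have hcirc : IsCircuitM 𝓘 ({x} : Finset α) := by
      refine ⟨hxnotind, fun D hD hsub => ?_⟩
      rcases Finset.subset_singleton_iff.1 hsub with rfl | rfl
      · exact absurd h1 hD
      · rfl
    have hbroken : IsBrokenCircuitM 𝓘 ℓ (∅ : Finset α) := by
      refine ⟨{x}, x, hcirc, Finset.mem_singleton_self x, ?_, ?_⟩
      · intro e' he' hne
        exact absurd (Finset.mem_singleton.1 he') hne
      · simp
    have hempty : Finset.univ.filter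
        (fun F : Finset α => ∀ K, IsBrokenCircuitM 𝓘 ℓ K → ¬ K ⊆ F) = ∅ := by
      ext F
      simp only [Finset.mem_filter, Finset.mem_univ, true_and, Finset.notMem_empty, iff_false]
      intro h
      exact h ∅ hbroken (Finset.empty_subset F)
    rw [hempty, Finset.sum_empty]
end
end

section
/- Let M=(E,𝓘) be a matroid with m = r_M(E), let X be a totally ordered set, and let ℓ : E → X be an injective labeling function. Then χ̃_M = Σ_{F ⊆ E, F contains no broken circuit of M as a subset} (−1)^{|F|} x^{m − |F|} in ℤ[x]. -/
open scoped Classical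

noncomputable section

/-!
When `∅` is closed, both sides equal `∑_{S ⊆ E} (-1)^{|S|} x^{m - r(S)}`. Grouping the sets `S`
by their closure, a flat of the same rank, the inner sums `∑_{S̄ = F} (-1)^{|S|}` satisfy the
recursion defining `μ(∅, F)`, because `∑_{S ⊆ F} (-1)^{|S|} = [F = ∅]`. On the other hand, `S`
contains a broken circuit iff some `e` is spanned by the elements of `S` of smaller label. Toggling
the membership in `S` of one such `e`, chosen depending only on the set of all such `e` (which the
toggle does not change), preserves the rank and flips the sign, so these sets cancel. The remaining
sets contain no circuit, so `r(S) = |S|`. If `∅` is not closed there is a loop `x`, and then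
`∅ = {x} ∖ {x}` is itself a broken circuit, so the right-hand side is the empty sum.
-/

open Finset

namespace FinsetMatroid

variable {α : Type*} [DecidableEq α] {𝓘 : Finset (Finset α)} {S T Z : Finset α} {x y : α}

theorem card_le_mrank (hZ : Z ∈ 𝓘) (hZS : Z ⊆ S) : #Z ≤ mrank 𝓘 S :=
  le_sup (f := card) (mem_filter.2 ⟨hZ, hZS⟩)

theorem mrank_le {n : ℕ} (h : ∀ Z ∈ 𝓘, Z ⊆ S → #Z ≤ n) : mrank 𝓘 S ≤ n :=
  Finset.sup_le fun Z hZ => h Z (mem_filter.1 hZ).1 (mem_filter.1 hZ).2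

theorem mrank_mono (h : S ⊆ T) : mrank 𝓘 S ≤ mrank 𝓘 T :=
  mrank_le fun _ hZ hZS => card_le_mrank hZ (hZS.trans h)

theorem mrank_le_card : mrank 𝓘 S ≤ #S :=
  mrank_le fun _ _ hZS => card_le_card hZS

theorem mrank_eq_card_of_mem (h : S ∈ 𝓘) : mrank 𝓘 S = #S :=
  mrank_le_card.antisymm (card_le_mrank h Subset.rfl)

theorem exists_basis (h : ∅ ∈ 𝓘) (S : Finset α) : ∃ B ∈ 𝓘, B ⊆ S ∧ #B = mrank 𝓘 S := by
  have hne : (𝓘.filter fun Z => Z ⊆ S).Nonempty := ⟨∅, mem_filter.2 ⟨h, empty_subset S⟩⟩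
  obtain ⟨B, hB, hBsup⟩ := exists_mem_eq_sup _ hne card
  exact ⟨B, (mem_filter.1 hB).1, (mem_filter.1 hB).2, hBsup.symm⟩

def Spans (𝓘 : Finset (Finset α)) (A : Finset α) (x : α) : Prop :=
  mrank 𝓘 (insert x A) = mrank 𝓘 A

theorem spans_of_mem (h : x ∈ S) : Spans 𝓘 S x := by
  rw [Spans, insert_eq_of_mem h]

theorem mrank_eq_mrank_erase (hy : Spans 𝓘 (S.erase y) y) : mrank 𝓘 S = mrank 𝓘 (S.erase y) := by
  by_cases h : y ∈ S
  · conv_lhs => rw [← insert_erase h]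
    exact hy
  · rw [erase_eq_of_notMem h]

structure IndepAxioms (𝓘 : Finset (Finset α)) : Prop where
  empty_mem : ∅ ∈ 𝓘
  subset_mem : ∀ Y ∈ 𝓘, ∀ Z : Finset α, Z ⊆ Y → Z ∈ 𝓘
  augment : ∀ Y ∈ 𝓘, ∀ Z ∈ 𝓘, #Y < #Z → ∃ x ∈ Z \ Y, insert x Y ∈ 𝓘

namespace IndepAxioms

variable (hM : IndepAxioms 𝓘)
include hM

theorem exists_basis_superset {B₀ : Finset α} (hB₀ : B₀ ∈ 𝓘) (hB₀S : B₀ ⊆ S) :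
    ∃ B ∈ 𝓘, B₀ ⊆ B ∧ B ⊆ S ∧ #B = mrank 𝓘 S := by
  obtain ⟨B, hB, hBmax⟩ := exists_max_image (𝓘.filter fun B => B₀ ⊆ B ∧ B ⊆ S) card
    ⟨B₀, mem_filter.2 ⟨hB₀, Subset.rfl, hB₀S⟩⟩
  obtain ⟨hBI, hB₀B, hBS⟩ := mem_filter.1 hB
  refine ⟨B, hBI, hB₀B, hBS, le_antisymm (card_le_mrank hBI hBS) (not_lt.1 fun hlt => ?_)⟩
  obtain ⟨B₁, hB₁, hB₁S, hB₁card⟩ := exists_basis hM.empty_mem S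
  obtain ⟨y, hy, hyB⟩ := hM.augment B hBI B₁ hB₁ (hB₁card ▸ hlt)
  have := hBmax (insert y B) (mem_filter.2
    ⟨hyB, hB₀B.trans (subset_insert y B), insert_subset (hB₁S (mem_sdiff.1 hy).1) hBS⟩)
  rw [card_insert_of_notMem (mem_sdiff.1 hy).2] at this
  omega

theorem spans_mono (hST : S ⊆ T) (hx : Spans 𝓘 S x) : Spans 𝓘 T x := by
  obtain ⟨B₀, hB₀, hB₀S, hB₀card⟩ := exists_basis hM.empty_mem S
  obtain ⟨B, hB, hB₀B, hBT, hBcard⟩ := hM.exists_basis_superset hB₀ (hB₀S.trans hST)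
  refine le_antisymm ?_ (mrank_mono (subset_insert x T))
  rw [← hBcard]
  refine mrank_le fun Z hZ hZsub => not_lt.1 fun hlt => ?_
  obtain ⟨y, hy, hyB⟩ := hM.augment B hB Z hZ hlt
  obtain ⟨hyZ, hyB'⟩ := mem_sdiff.1 hy
  rcases mem_insert.1 (hZsub hyZ) with rfl | hyT
  · have := card_le_mrank (hM.subset_mem _ hyB _ (insert_subset_insert y hB₀B))
      (insert_subset_insert y hB₀S)
    rw [card_insert_of_notMem fun h => hyB' (hB₀B h), hB₀card, hx] at this
    omega
  · have := card_le_mrank hyB (insert_subset hyT hBT)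
    rw [card_insert_of_notMem hyB', hBcard] at this
    omega

theorem spans_insert_iff (hy : Spans 𝓘 T y) : Spans 𝓘 (insert y T) x ↔ Spans 𝓘 T x := by
  have hy' : Spans 𝓘 (insert x T) y := hM.spans_mono (subset_insert x T) hy
  unfold Spans at *
  rw [insert_comm, hy', hy]

theorem spans_iff_spans_erase (hy : Spans 𝓘 (S.erase y) y) :
    Spans 𝓘 S x ↔ Spans 𝓘 (S.erase y) x := by
  by_cases h : y ∈ S
  · conv_lhs => rw [← insert_erase h]
    exact hM.spans_insert_iff hy
  · rw [erase_eq_of_notMem h]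

end IndepAxioms

section Closure

variable {α : Type*} [Fintype α] [DecidableEq α] {𝓘 : Finset (Finset α)} {S G : Finset α}

def spanned (𝓘 : Finset (Finset α)) (S : Finset α) : Finset α :=
  univ.filter (Spans 𝓘 S)

theorem mem_spanned {x : α} : x ∈ spanned 𝓘 S ↔ Spans 𝓘 S x := by
  simp [spanned]

theorem subset_spanned : S ⊆ spanned 𝓘 S := fun _ hx => mem_spanned.2 (spans_of_mem hx)

variable (hM : IndepAxioms 𝓘)
include hM

theorem IndepAxioms.mrank_spanned : mrank 𝓘 (spanned 𝓘 S) = mrank 𝓘 S := by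
  obtain ⟨B, hB, hBS, hBcard⟩ := exists_basis hM.empty_mem S
  refine le_antisymm ?_ (mrank_mono subset_spanned)
  rw [← hBcard]
  refine mrank_le fun Z hZ hZsub => not_lt.1 fun hlt => ?_
  obtain ⟨y, hy, hyB⟩ := hM.augment B hB Z hZ hlt
  have := card_le_mrank hyB (insert_subset_insert y hBS)
  rw [card_insert_of_notMem (mem_sdiff.1 hy).2, hBcard,
    mem_spanned.1 (hZsub (mem_sdiff.1 hy).1)] at this
  omega

theorem IndepAxioms.isFlat_spanned : IsFlat 𝓘 (spanned 𝓘 S) := by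
  refine ⟨mrank 𝓘 S, hM.mrank_spanned, fun W hW hsub => Subset.antisymm (fun x hx => ?_) hsub⟩
  have hxW : insert x S ⊆ W := insert_subset hx (subset_spanned.trans hsub)
  exact mem_spanned.2 <|
    ((mrank_mono hxW).trans hW.le).antisymm (mrank_mono (subset_insert x S))

theorem IndepAxioms.spanned_subset_of_isFlat (hG : IsFlat 𝓘 G) (hSG : S ⊆ G) :
    spanned 𝓘 S ⊆ G := by
  intro x hx
  obtain ⟨k, hk, hmax⟩ := hG
  have hxG : Spans 𝓘 G x := hM.spans_mono hSG (mem_spanned.1 hx)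
  rw [← hmax (insert x G) (hxG.trans hk) (subset_insert x G)]
  exact mem_insert_self x G

theorem IndepAxioms.mclosure_eq_spanned : mclosure 𝓘 S = spanned 𝓘 S := by
  refine Subset.antisymm (fun x hx => ?_) fun x hx => ?_
  · exact (mem_filter.1 hx).2 _ hM.isFlat_spanned subset_spanned
  · exact mem_filter.2 ⟨mem_univ x, fun G hG hSG => hM.spanned_subset_of_isFlat hG hSG hx⟩

end Closure

section Circuits

theorem nonempty_of_isCircuitM {α : Type*} {𝓘 : Finset (Finset α)} {C : Finset α} (h : ∅ ∈ 𝓘)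
    (hC : IsCircuitM 𝓘 C) : C.Nonempty :=
  nonempty_iff_ne_empty.2 fun hC0 => hC.1 (hC0 ▸ h)

variable {α : Type*} [DecidableEq α] {𝓘 : Finset (Finset α)} {S C A : Finset α} {x e : α}

theorem exists_isCircuitM_subset (hS : S ∉ 𝓘) : ∃ C ⊆ S, IsCircuitM 𝓘 C := by
  obtain ⟨C, hC, hCmin⟩ := exists_min_image (S.powerset.filter (· ∉ 𝓘)) card
    ⟨S, mem_filter.2 ⟨mem_powerset_self S, hS⟩⟩
  obtain ⟨hCS, hCI⟩ := mem_filter.1 hC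
  refine ⟨C, mem_powerset.1 hCS, hCI, fun D hD hDC => eq_of_subset_of_card_le hDC ?_⟩
  exact hCmin D (mem_filter.2 ⟨mem_powerset.2 (hDC.trans (mem_powerset.1 hCS)), hD⟩)

theorem erase_mem_of_isCircuitM (hC : IsCircuitM 𝓘 C) (he : e ∈ C) : C.erase e ∈ 𝓘 :=
  not_not.1 fun h => by
    have hCe : C.erase e = C := hC.2 _ h (erase_subset e C)
    exact notMem_erase e C (hCe.symm ▸ he)

theorem spans_erase_of_isCircuitM (hC : IsCircuitM 𝓘 C) (he : e ∈ C) :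
    Spans 𝓘 (C.erase e) e := by
  have hCe := erase_mem_of_isCircuitM hC he
  have hrank : mrank 𝓘 C ≤ #(C.erase e) := mrank_le fun Z hZ hZC => by
    have hZC' : Z ⊂ C := ssubset_of_subset_of_ne hZC fun h => hC.1 (h ▸ hZ)
    have := card_lt_card hZC'
    rw [card_erase_of_mem he]
    omega
  rw [Spans, insert_erase he, mrank_eq_card_of_mem hCe]
  exact hrank.antisymm (mrank_eq_card_of_mem hCe ▸ mrank_mono (erase_subset e C))

theorem IndepAxioms.exists_isCircuitM_of_spans (hM : IndepAxioms 𝓘) (hx : Spans 𝓘 A x)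
    (hxA : x ∉ A) : ∃ C, IsCircuitM 𝓘 C ∧ x ∈ C ∧ C.erase x ⊆ A := by
  obtain ⟨B, hB, hBA, hBcard⟩ := exists_basis hM.empty_mem A
  have hxB : x ∉ B := fun h => hxA (hBA h)
  have hdep : insert x B ∉ 𝓘 := fun hI => by
    have := card_le_mrank hI (insert_subset_insert x hBA)
    rw [card_insert_of_notMem hxB, hBcard, hx] at this
    omega
  obtain ⟨C, hCsub, hC⟩ := exists_isCircuitM_subset hdep
  have hCB : C.erase x ⊆ B := fun y hy =>
    (mem_insert.1 (hCsub (mem_of_mem_erase hy))).resolve_left (ne_of_mem_erase hy)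
  have hxC : x ∈ C := not_not.1 fun hxC =>
    hC.1 (hM.subset_mem B hB C (erase_eq_of_notMem hxC ▸ hCB))
  exact ⟨C, hC, hxC, hCB.trans hBA⟩

end Circuits

section BrokenCircuits

variable {α : Type*} [DecidableEq α] {X : Type*} [LinearOrder X]
  {𝓘 : Finset (Finset α)} {ℓ : α → X} {S T K : Finset α} {e e₀ : α}

-- The definition erases with the classical `DecidableEq` instance; this uses the ambient one.
theorem isBrokenCircuitM_iff : IsBrokenCircuitM 𝓘 ℓ K ↔
    ∃ C e, IsCircuitM 𝓘 C ∧ e ∈ C ∧ (∀ e' ∈ C, e' ≠ e → ℓ e' < ℓ e) ∧ K = C.erase e := by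
  unfold IsBrokenCircuitM
  congr!

theorem mem_of_forall_not_isBrokenCircuitM (h𝓘 : ∅ ∈ 𝓘) (hℓ : Function.Injective ℓ)
    (h : ∀ K, IsBrokenCircuitM 𝓘 ℓ K → ¬ K ⊆ S) : S ∈ 𝓘 := by
  refine not_not.1 fun hS => ?_
  obtain ⟨C, hCS, hC⟩ := exists_isCircuitM_subset hS
  obtain ⟨e, heC, hmax⟩ := exists_max_image C ℓ (nonempty_of_isCircuitM h𝓘 hC)
  refine h (C.erase e) (isBrokenCircuitM_iff.2 ⟨C, e, hC, heC, fun e' he' hne => ?_, rfl⟩)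
    ((erase_subset e C).trans hCS)
  exact (hmax e' he').lt_of_ne fun hl => hne (hℓ hl)

def below (ℓ : α → X) (S : Finset α) (e : α) : Finset α :=
  S.filter fun s => ℓ s < ℓ e

theorem below_erase : (below ℓ S e).erase e₀ = below ℓ (S.erase e₀) e :=
  (filter_erase _ _ _).symm

theorem below_subset_erase : below ℓ S e ⊆ S.erase e := fun _ hs =>
  mem_erase.2 ⟨fun h => (h ▸ (mem_filter.1 hs).2).false, (mem_filter.1 hs).1⟩

variable [Fintype α]

def spannedBelow (𝓘 : Finset (Finset α)) (ℓ : α → X) (S : Finset α) : Finset α :=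
  univ.filter fun e => Spans 𝓘 (below ℓ S e) e

theorem mem_spannedBelow : e ∈ spannedBelow 𝓘 ℓ S ↔ Spans 𝓘 (below ℓ S e) e := by
  simp [spannedBelow]

variable (hM : IndepAxioms 𝓘)
include hM

theorem IndepAxioms.isBrokenCircuitM_empty (hcl : spanned 𝓘 ∅ ≠ ∅) : IsBrokenCircuitM 𝓘 ℓ ∅ := by
  obtain ⟨x, hx⟩ := nonempty_iff_ne_empty.2 hcl
  have hloop : ({x} : Finset α) ∉ 𝓘 := fun hI => by
    have h := mrank_le_card (𝓘 := 𝓘) (S := ∅)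
    rw [← mem_spanned.1 hx, insert_empty, mrank_eq_card_of_mem hI] at h
    simp at h
  refine isBrokenCircuitM_iff.2 ⟨{x}, x, ⟨hloop, fun D hD hDx => ?_⟩, mem_singleton_self x,
    fun e he hne => absurd (mem_singleton.1 he) hne, (erase_singleton x).symm⟩
  exact (subset_singleton_iff.1 hDx).resolve_left fun h => hD (h ▸ hM.empty_mem)

theorem IndepAxioms.spannedBelow_nonempty_iff :
    (spannedBelow 𝓘 ℓ S).Nonempty ↔ ∃ K, IsBrokenCircuitM 𝓘 ℓ K ∧ K ⊆ S := by
  simp only [isBrokenCircuitM_iff]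
  constructor
  · rintro ⟨e, he⟩
    obtain ⟨C, hC, heC, hCe⟩ := hM.exists_isCircuitM_of_spans (mem_spannedBelow.1 he)
      fun h => (mem_filter.1 h).2.false
    refine ⟨C.erase e, ⟨C, e, hC, heC, fun e' he' hne => ?_, rfl⟩, hCe.trans (filter_subset _ S)⟩
    exact (mem_filter.1 (hCe (mem_erase.2 ⟨hne, he'⟩))).2
  · rintro ⟨_, ⟨C, e, hC, heC, hmax, rfl⟩, hCS⟩
    have hsub : C.erase e ⊆ below ℓ S e := fun y hy =>
      mem_filter.2 ⟨hCS hy, hmax y (mem_of_mem_erase hy) (ne_of_mem_erase hy)⟩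
    exact ⟨e, mem_spannedBelow.2 (hM.spans_mono hsub (spans_erase_of_isCircuitM hC heC))⟩

theorem IndepAxioms.spans_erase_of_mem_spannedBelow (he₀ : e₀ ∈ spannedBelow 𝓘 ℓ S) :
    Spans 𝓘 (S.erase e₀) e₀ :=
  hM.spans_mono below_subset_erase (mem_spannedBelow.1 he₀)

-- For `ℓ e₀ < ℓ e` the pivot `e₀` is spanned by the rest of `below ℓ T e`, so it may be dropped;
-- otherwise `e₀ ∉ below ℓ T e` anyway.
theorem IndepAxioms.spans_below_iff (he₀ : e₀ ∈ spannedBelow 𝓘 ℓ S)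
    (hT : T.erase e₀ = S.erase e₀) :
    Spans 𝓘 (below ℓ T e) e ↔ Spans 𝓘 ((below ℓ S e).erase e₀) e := by
  have hTS : (below ℓ T e).erase e₀ = (below ℓ S e).erase e₀ := by
    rw [below_erase, below_erase, hT]
  rw [← hTS]
  by_cases hlt : ℓ e₀ < ℓ e
  · refine hM.spans_iff_spans_erase (hM.spans_mono (fun y hy => ?_) (mem_spannedBelow.1 he₀))
    rw [hTS]
    obtain ⟨hyS, hy⟩ := mem_filter.1 hy
    exact mem_erase.2 ⟨fun h => (h ▸ hy).false, mem_filter.2 ⟨hyS, hy.trans hlt⟩⟩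
  · rw [erase_eq_of_notMem (s := below ℓ T e) fun h => hlt (mem_filter.1 h).2]

theorem IndepAxioms.spannedBelow_eq_of_erase_eq (he₀ : e₀ ∈ spannedBelow 𝓘 ℓ S)
    (hT : T.erase e₀ = S.erase e₀) : spannedBelow 𝓘 ℓ T = spannedBelow 𝓘 ℓ S := by
  ext e
  rw [mem_spannedBelow, mem_spannedBelow, hM.spans_below_iff he₀ hT, hM.spans_below_iff he₀ rfl]

theorem IndepAxioms.mrank_eq_of_erase_eq (he₀ : e₀ ∈ spannedBelow 𝓘 ℓ S)
    (hT : T.erase e₀ = S.erase e₀) : mrank 𝓘 T = mrank 𝓘 S := by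
  have hS := hM.spans_erase_of_mem_spannedBelow he₀
  rw [mrank_eq_mrank_erase (hT ▸ hS), mrank_eq_mrank_erase hS, hT]

end BrokenCircuits

section Involution

variable {α : Type*} [DecidableEq α]

theorem erase_symmDiff_singleton (S : Finset α) (e : α) :
    (symmDiff S {e}).erase e = S.erase e := by
  ext x
  by_cases h : x = e <;> simp [mem_symmDiff, h]

theorem neg_one_pow_card_symmDiff_singleton {R : Type*} [Ring R] (S : Finset α) (e : α) :
    (-1 : R) ^ #(symmDiff S {e}) = -(-1) ^ #S := by
  by_cases h : e ∈ S
  · have hS : symmDiff S {e} = S.erase e := by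
      rw [← erase_symmDiff_singleton, erase_eq_of_notMem]; simp [mem_symmDiff, h]
    rw [hS, ← card_erase_add_one h, pow_succ, mul_neg_one, neg_neg]
  · have hS : symmDiff S {e} = insert e S := by
      ext x; by_cases hx : x = e <;> simp [mem_symmDiff, hx, h]
    rw [hS, card_insert_of_notMem h, pow_succ, mul_neg_one]

variable [Fintype α] {X : Type*} [LinearOrder X] {𝓘 : Finset (Finset α)} {ℓ : α → X}
  {R : Type*} [Ring R]

theorem IndepAxioms.sum_filter_spannedBelow_nonempty (hM : IndepAxioms 𝓘) (g : ℕ → R) :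
    ∑ S ∈ univ with (spannedBelow 𝓘 ℓ S).Nonempty, (-1) ^ #S * g (mrank 𝓘 S) = 0 := by
  have choose_congr : ∀ {s t : Finset α} (hs : ∃ e, e ∈ s) (ht : ∃ e, e ∈ t),
      s = t → hs.choose = ht.choose := by
    rintro s _ hs ht rfl
    rfl
  have pivot : ∀ S ∈ univ.filter fun S => (spannedBelow 𝓘 ℓ S).Nonempty,
      ∃ e, e ∈ spannedBelow 𝓘 ℓ S := fun S hS => (mem_filter.1 hS).2
  have hsame : ∀ S hS, spannedBelow 𝓘 ℓ (symmDiff S {(pivot S hS).choose}) =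
      spannedBelow 𝓘 ℓ S := fun S hS =>
    hM.spannedBelow_eq_of_erase_eq (pivot S hS).choose_spec (erase_symmDiff_singleton _ _)
  refine sum_involution (fun S hS => symmDiff S {(pivot S hS).choose}) (fun S hS => ?_)
    (fun S hS _ => by simp [symmDiff_eq_left]) (fun S hS => ?_) (fun S hS => ?_)
  · rw [hM.mrank_eq_of_erase_eq (pivot S hS).choose_spec (erase_symmDiff_singleton _ _),
      neg_one_pow_card_symmDiff_singleton, neg_mul, add_neg_cancel]
  · exact mem_filter.2 ⟨mem_univ _, (hsame S hS).symm ▸ pivot S hS⟩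
  · rw [choose_congr _ (pivot S hS) (hsame S hS), symmDiff_symmDiff_cancel_right]

theorem IndepAxioms.sum_neg_one_pow_mul_mrank (hM : IndepAxioms 𝓘) (hℓ : Function.Injective ℓ)
    (g : ℕ → R) :
    ∑ S, (-1) ^ #S * g (mrank 𝓘 S) =
      ∑ F ∈ univ with ∀ K, IsBrokenCircuitM 𝓘 ℓ K → ¬ K ⊆ F, (-1) ^ #F * g #F := by
  have hbad : (univ.filter fun S => ¬ ∀ K, IsBrokenCircuitM 𝓘 ℓ K → ¬ K ⊆ S) =
      univ.filter fun S => (spannedBelow 𝓘 ℓ S).Nonempty := by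
    ext S
    simp [hM.spannedBelow_nonempty_iff]
  rw [← sum_filter_add_sum_filter_not univ fun F => ∀ K, IsBrokenCircuitM 𝓘 ℓ K → ¬ K ⊆ F,
    hbad, hM.sum_filter_spannedBelow_nonempty, add_zero]
  refine sum_congr rfl fun F hF => ?_
  rw [mrank_eq_card_of_mem
    (mem_of_forall_not_isBrokenCircuitM hM.empty_mem hℓ (mem_filter.1 hF).2)]

end Involution

section Mobius

variable {α : Type*} [Fintype α] [DecidableEq α] {𝓘 : Finset (Finset α)} {R : Type*} [Ring R]

theorem mobius_eq_of_sum_Icc_eq {P : Finset α → Prop} {T : Finset α}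
    (μ : Finset α → Finset α → ℤ) (hμ1 : μ T T = 1)
    (hμ2 : ∀ S, P S → T ⊂ S → μ T S = -∑ Z ∈ univ with P Z ∧ T ⊆ Z ∧ Z ⊂ S, μ T Z)
    (g : Finset α → ℤ)
    (hg : ∀ F, P F → T ⊆ F → ∑ Z ∈ univ with P Z ∧ T ⊆ Z ∧ Z ⊆ F, g Z = if F = T then 1 else 0)
    (F : Finset α) (hF : P F) (hTF : T ⊆ F) : μ T F = g F := by
  induction F using Finset.strongInduction with
  | H F ih =>
    have hIcc : (univ.filter fun Z => P Z ∧ T ⊆ Z ∧ Z ⊆ F) =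
        insert F (univ.filter fun Z => P Z ∧ T ⊆ Z ∧ Z ⊂ F) := by
      ext Z
      simp only [mem_filter, mem_univ, true_and, mem_insert, subset_iff_ssubset_or_eq]
      grind
    have hIco : ∑ Z ∈ univ with P Z ∧ T ⊆ Z ∧ Z ⊂ F, g Z =
        ∑ Z ∈ univ with P Z ∧ T ⊆ Z ∧ Z ⊂ F, μ T Z := sum_congr rfl fun Z hZ => by
      obtain ⟨hZ, hTZ, hZF⟩ := (mem_filter.1 hZ).2
      exact (ih Z hZF hZ hTZ).symm
    have hsum := hg F hF hTF
    rw [hIcc, sum_insert (by simp), hIco] at hsum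
    obtain rfl | hne := eq_or_ne F T
    · rw [filter_false_of_mem fun Z _ hZ => hZ.2.2.not_subset hZ.2.1, sum_empty, add_zero,
        if_pos rfl] at hsum
      rw [hμ1, hsum]
    · rw [hμ2 F hF (ssubset_of_subset_of_ne hTF hne.symm)]
      rw [if_neg hne] at hsum
      linarith

variable (hM : IndepAxioms 𝓘)
include hM

theorem IndepAxioms.sum_isFlat_sum_spanned_eq {F : Finset α} (hF : IsFlat 𝓘 F) :
    ∑ Z ∈ univ with IsFlat 𝓘 Z ∧ ∅ ⊆ Z ∧ Z ⊆ F, ∑ S ∈ univ with spanned 𝓘 S = Z, (-1 : ℤ) ^ #S =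
      if F = ∅ then 1 else 0 := by
  have hmaps : ∀ S ∈ F.powerset, spanned 𝓘 S ∈ univ.filter fun Z => IsFlat 𝓘 Z ∧ ∅ ⊆ Z ∧ Z ⊆ F :=
    fun S hS => mem_filter.2
      ⟨mem_univ _, hM.isFlat_spanned, empty_subset _,
        hM.spanned_subset_of_isFlat hF (mem_powerset.1 hS)⟩
  rw [← sum_powerset_neg_one_pow_card, ← sum_fiberwise_of_maps_to hmaps]
  refine sum_congr rfl fun Z hZ => sum_congr ?_ fun _ _ => rfl
  ext S
  simp only [mem_filter, mem_univ, true_and, mem_powerset]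
  exact ⟨fun h => ⟨subset_spanned.trans (h ▸ (mem_filter.1 hZ).2.2.2), h⟩, And.right⟩

theorem IndepAxioms.sum_isFlat_mobius_mul (μ : Finset α → Finset α → ℤ)
    (hμ1 : μ ∅ ∅ = 1)
    (hμ2 : ∀ S, IsFlat 𝓘 S → ∅ ⊂ S →
      μ ∅ S = -∑ Z ∈ univ with IsFlat 𝓘 Z ∧ ∅ ⊆ Z ∧ Z ⊂ S, μ ∅ Z)
    (g : ℕ → R) :
    ∑ F ∈ univ with IsFlat 𝓘 F, (μ ∅ F : R) * g (mrank 𝓘 F) = ∑ S, (-1) ^ #S * g (mrank 𝓘 S) := by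
  have hmaps : ∀ S ∈ (univ : Finset (Finset α)), spanned 𝓘 S ∈ univ.filter (IsFlat 𝓘) :=
    fun S _ => mem_filter.2 ⟨mem_univ _, hM.isFlat_spanned⟩
  rw [← sum_fiberwise_of_maps_to hmaps]
  refine sum_congr rfl fun F hF => ?_
  rw [mobius_eq_of_sum_Icc_eq μ hμ1 hμ2 _ (fun F hF _ => hM.sum_isFlat_sum_spanned_eq hF) F
    (mem_filter.1 hF).2 (empty_subset F), Int.cast_sum, sum_mul]
  refine sum_congr rfl fun S hS => ?_
  rw [← (mem_filter.1 hS).2, hM.mrank_spanned]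
  norm_cast

end Mobius

end FinsetMatroid

/-- Let `M = (E, 𝓘)` be a matroid (ground set the whole finite type
`α`), with `m = r_M(E)`, and let `ℓ` be an injective labeling function. Let `μ` be the
Möbius function of the poset of flats of `M`. Then the polynomial
`χ̃_M = [∅̄ = ∅] · ∑_{F flat} μ(∅̄, F) x^{m − r_M(F)}` satisfies
`χ̃_M = ∑_{F ⊆ E, F contains no broken circuit of M} (−1)^{|F|} x^{m − |F|}`
in `ℤ[x]`. -/
theorem matroid_charPoly_whitney
    {α : Type*} [Fintype α] [DecidableEq α]
    (𝓘 : Finset (Finset α))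
    (h1 : ∅ ∈ 𝓘)
    (h2 : ∀ Y ∈ 𝓘, ∀ Z : Finset α, Z ⊆ Y → Z ∈ 𝓘)
    (h3 : ∀ Y ∈ 𝓘, ∀ Z ∈ 𝓘, Y.card < Z.card → ∃ x ∈ Z \ Y, insert x Y ∈ 𝓘)
    {X : Type*} [LinearOrder X] (ℓ : α → X) (hℓ : Function.Injective ℓ)
    (μ : Finset α → Finset α → ℤ)
    (hμ1 : ∀ T : Finset α, IsFlat 𝓘 T → μ T T = 1)
    (hμ2 : ∀ T S : Finset α, IsFlat 𝓘 T → IsFlat 𝓘 S → T ⊂ S →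
      μ T S = -∑ Z ∈ Finset.univ.filter (fun Z : Finset α => IsFlat 𝓘 Z ∧ T ⊆ Z ∧ Z ⊂ S),
        μ T Z) :
    (if mclosure 𝓘 ∅ = (∅ : Finset α) then
        ∑ F ∈ Finset.univ.filter (fun F : Finset α => IsFlat 𝓘 F),
          Polynomial.C (μ (mclosure 𝓘 ∅) F) *
            Polynomial.X ^ (mrank 𝓘 Finset.univ - mrank 𝓘 F)
      else 0) =
      ∑ F ∈ Finset.univ.filter
          (fun F : Finset α => ∀ K, IsBrokenCircuitM 𝓘 ℓ K → ¬ K ⊆ F),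
        (-1 : Polynomial ℤ) ^ F.card *
          Polynomial.X ^ (mrank 𝓘 Finset.univ - F.card) := by
  have hM : FinsetMatroid.IndepAxioms 𝓘 := ⟨h1, h2, h3⟩
  rw [hM.mclosure_eq_spanned]
  split_ifs with hcl
  · have hflat : IsFlat 𝓘 ∅ := hcl ▸ hM.isFlat_spanned
    simp only [hcl, eq_intCast]
    rw [hM.sum_isFlat_mobius_mul μ (hμ1 ∅ hflat) (fun S hS => hμ2 ∅ S hflat hS)
      fun n => Polynomial.X ^ (mrank 𝓘 univ - n)]
    exact hM.sum_neg_one_pow_mul_mrank hℓ fun n => Polynomial.X ^ (mrank 𝓘 univ - n)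
  · refine (sum_eq_zero fun F hF => ?_).symm
    exact absurd (empty_subset F) ((mem_filter.1 hF).2 ∅ (hM.isBrokenCircuitM_empty (ℓ := ℓ) hcl))
end
end
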